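/- Let E = E(I₀,{n_k},{c_k},{ξ_{k,l}}) be a homogeneous perfect set and suppose there exists χ ≥ 1 such that max_{1≤l≤n_k−1} ξ_{k,l} ≤ χ·min_{1≤l≤n_k−1} ξ_{k,l} for every k ≥ 1. Then dim_P E = limsup_{k→∞} log(n₁n₂⋯n_k n_{k+1}) / ( − log( (c₁c₂⋯c_k − ξ_{k+1,0} − ξ_{k+1,n_{k+1}}) / n_{k+1} ) ). -/

import Mathlib

open Set Filter Metric

noncomputable section

/-- A word `σ = σ₁⋯σ_k` is valid for the branching sequence `n` if `1 ≤ σ_j ≤ n j`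
for every `1 ≤ j ≤ k`.  Words are represented as lists (read with 1-based indices). -/
def ValidWord (n : ℕ → ℕ) (σ : List ℕ) : Prop :=
  ∀ j, j < σ.length → 1 ≤ σ.getD j 0 ∧ σ.getD j 0 ≤ n (j + 1)

/-- The conditions (1)–(4) of Definition 2.1: the family of closed intervals
`I_σ = [a σ, b σ]` (for `σ ∈ D`) has homogeneous perfect structure with parameters
`n`, `c`, `ξ`. -/
structure HPStruct (n : ℕ → ℕ) (c : ℕ → ℝ) (ξ : ℕ → ℕ → ℝ) (a b : List ℕ → ℝ) : Prop where
  /-- each `I_{σ*j}` is a subinterval of `I_σ` -/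
  sub : ∀ σ : List ℕ, ValidWord n σ → ∀ j, 1 ≤ j → j ≤ n (σ.length + 1) →
    Set.Icc (a (σ ++ [j])) (b (σ ++ [j])) ⊆ Set.Icc (a σ) (b σ)
  /-- `min I_{σ*(l+1)} ≥ max I_{σ*l}` -/
  ord : ∀ σ : List ℕ, ValidWord n σ → ∀ l, 1 ≤ l → l + 1 ≤ n (σ.length + 1) →
    b (σ ++ [l]) ≤ a (σ ++ [l + 1])
  /-- `|I_{σ*j}| / |I_σ| = c_k` -/
  ratio : ∀ σ : List ℕ, ValidWord n σ → ∀ j, 1 ≤ j → j ≤ n (σ.length + 1) →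
    b (σ ++ [j]) - a (σ ++ [j]) = c (σ.length + 1) * (b σ - a σ)
  /-- `min I_{σ*1} - min I_σ = ξ_{k,0}` -/
  gap0 : ∀ σ : List ℕ, ValidWord n σ → a (σ ++ [1]) - a σ = ξ (σ.length + 1) 0
  /-- `min I_{σ*(l+1)} - max I_{σ*l} = ξ_{k,l}` -/
  gapl : ∀ σ : List ℕ, ValidWord n σ → ∀ l, 1 ≤ l → l + 1 ≤ n (σ.length + 1) →
    a (σ ++ [l + 1]) - b (σ ++ [l]) = ξ (σ.length + 1) l
  /-- `max I_σ - max I_{σ*n_k} = ξ_{k,n_k}` -/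
  gapn : ∀ σ : List ℕ, ValidWord n σ → b σ - b (σ ++ [n (σ.length + 1)]) =
    ξ (σ.length + 1) (n (σ.length + 1))

/-- A homogeneous perfect set datum `E(I₀, {n_k}, {c_k}, {ξ_{k,l}})` of Definition 2.1:
a nondegenerate initial closed interval `I₀ = [a ∅, b ∅]`, integers `n_k ≥ 2`,
ratios `c_k > 0` with `n_k c_k < 1`, nonnegative gaps `ξ_{k,l}` (`0 ≤ l ≤ n_k`), and a
family of closed intervals `I_σ = [a σ, b σ]` with homogeneous perfect structure. -/
structure HPS where
  n : ℕ → ℕ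
  c : ℕ → ℝ
  ξ : ℕ → ℕ → ℝ
  a : List ℕ → ℝ
  b : List ℕ → ℝ
  hn : ∀ k, 1 ≤ k → 2 ≤ n k
  hc : ∀ k, 1 ≤ k → 0 < c k
  hnc : ∀ k, 1 ≤ k → (n k : ℝ) * c k < 1
  hξ : ∀ k, 1 ≤ k → ∀ l, l ≤ n k → 0 ≤ ξ k l
  hab : a [] < b []
  struct : HPStruct n c ξ a b

namespace HPS

variable (S : HPS)

/-- `E_k`, the union of the `k`-order basic intervals. -/
def Ek (k : ℕ) : Set ℝ :=
  ⋃ σ ∈ {σ : List ℕ | σ.length = k ∧ ValidWord S.n σ}, Set.Icc (S.a σ) (S.b σ)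

/-- The homogeneous perfect set `E = ⋂_k E_k`. -/
def E : Set ℝ := ⋂ k, S.Ek k

/-- Left endpoint of the trimmed interval `I_σ*` (for `σ ∈ D_k`):
`min I_σ* - min I_σ = ξ_{k+1,0}`. -/
def aStar (σ : List ℕ) : ℝ := S.a σ + S.ξ (σ.length + 1) 0

/-- Right endpoint of the trimmed interval `I_σ*`:
`max I_σ - max I_σ* = ξ_{k+1,n_{k+1}}`. -/
def bStar (σ : List ℕ) : ℝ := S.b σ - S.ξ (σ.length + 1) (S.n (σ.length + 1))

/-- `E_k* = ⋃_{σ ∈ D_k} I_σ*`. -/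
def EkStar (k : ℕ) : Set ℝ :=
  ⋃ σ ∈ {σ : List ℕ | σ.length = k ∧ ValidWord S.n σ}, Set.Icc (S.aStar σ) (S.bStar σ)

/-- `δ_k = |I_σ*|` for `σ ∈ D_k` (this common value is computed on the word `1⋯1`). -/
def delta (k : ℕ) : ℝ :=
  S.bStar (List.replicate k 1) - S.aStar (List.replicate k 1)

/-- `c_k* = δ_k / δ_{k-1}`. -/
def cStar (k : ℕ) : ℝ := S.delta k / S.delta (k - 1)

/-- `δ_k* = δ₀ c₁* ⋯ c_k*`. -/
def deltaStar (k : ℕ) : ℝ := S.delta 0 * ∏ j ∈ Finset.Icc 1 k, S.cStar j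

/-- `N_k* = n₁* ⋯ n_k* = n₁ ⋯ n_k`. -/
def Nstar (k : ℕ) : ℕ := ∏ j ∈ Finset.Icc 1 k, S.n j

/-- The reconstructed gap parameters: `ξ*_{k,l} = ξ_{k,l} + ξ_{k+1,0} + ξ_{k+1,n_{k+1}}`
for `1 ≤ l ≤ n_k - 1`, `ξ*_{k,0} = ξ_{k+1,0}`, `ξ*_{k,n_k} = ξ_{k+1,n_{k+1}}`. -/
def xiStar (k l : ℕ) : ℝ :=
  if l = 0 then S.ξ (k + 1) 0
  else if l = S.n k then S.ξ (k + 1) (S.n (k + 1))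
  else S.ξ k l + S.ξ (k + 1) 0 + S.ξ (k + 1) (S.n (k + 1))

/-- `α̲*_k = min_{1 ≤ l ≤ n_k - 1} ξ*_{k,l}`. -/
def alphaLo (k : ℕ) : ℝ := sInf ((fun l => S.xiStar k l) '' Set.Icc 1 (S.n k - 1))

/-- `α̅*_k = max_{1 ≤ l ≤ n_k - 1} ξ*_{k,l}`. -/
def alphaHi (k : ℕ) : ℝ := sSup ((fun l => S.xiStar k l) '' Set.Icc 1 (S.n k - 1))

end HPS

/-- The gap-comparability condition: `max_{1≤l≤n_k-1} ξ_{k,l} ≤ χ · min_{1≤l≤n_k-1} ξ_{k,l}`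
for every `k ≥ 1`. -/
def GapComparable (S : HPS) (χ : ℝ) : Prop :=
  ∀ k, 1 ≤ k → ∀ l l', 1 ≤ l → l ≤ S.n k - 1 → 1 ≤ l' → l' ≤ S.n k - 1 →
    S.ξ k l ≤ χ * S.ξ k l'

/-- `M = ⌊2χ⌋ + 1`. -/
def Mconst (χ : ℝ) : ℕ := ⌊2 * χ⌋₊ + 1

/-- `i_k`: equal to `1` if `n_k < M`, and otherwise the integer with `M^{i_k} ≤ n_k < M^{i_k+1}`. -/
def HPS.ik (S : HPS) (χ : ℝ) (k : ℕ) : ℕ := max 1 (Nat.log (Mconst χ) (S.n k))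

/-- `m_k = i₁ + ⋯ + i_k` (with `m₀ = 0`). -/
def HPS.mIdx (S : HPS) (χ : ℝ) (k : ℕ) : ℕ := ∑ l ∈ Finset.Icc 1 k, S.ik χ l

/-- For `m ≥ 1`, the index `k` with `m_{k-1} < m ≤ m_k`. -/
def HPS.kOf (S : HPS) (χ : ℝ) (m : ℕ) : ℕ := sInf {k | m ≤ S.mIdx χ k}

/-- The least number of closed `δ`-balls needed to cover `E` (`⊤` if no finite cover exists). -/
def coveringNumber (δ : ℝ) (E : Set ℝ) : ℕ∞ :=
  ⨅ (s : Finset ℝ) (_ : E ⊆ ⋃ x ∈ s, Metric.closedBall x δ), (s.card : ℕ∞)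

open Classical in
/-- Upper box(-counting) dimension:
`limsup_{δ→0⁺} log N_δ(E) / (-log δ)` (and `⊤` for sets with no finite cover). -/
def upperBoxDim (E : Set ℝ) : EReal :=
  if ∀ δ : ℝ, 0 < δ → coveringNumber δ E ≠ ⊤ then
    Filter.limsup
      (fun δ : ℝ =>
        ((Real.log ((coveringNumber δ E).toNat : ℝ) / (-Real.log δ) : ℝ) : EReal))
      (nhdsWithin 0 (Set.Ioi 0))
  else ⊤

/-- Packing dimension, via the modified upper box dimension:
`dim_P E = inf { sup_i ub-dim(F i) : E ⊆ ⋃ i, F i }`. -/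
def packingDim (E : Set ℝ) : EReal :=
  ⨅ (F : ℕ → Set ℝ) (_ : E ⊆ ⋃ i, F i), ⨆ i, upperBoxDim (F i)

/-! ### Auxiliary lemmas -/

section Covering

lemma coveringNumber_le_of_cover {δ : ℝ} {A : Set ℝ} {s : Finset ℝ}
    (h : A ⊆ ⋃ x ∈ s, Metric.closedBall x δ) : coveringNumber δ A ≤ s.card :=
  iInf₂_le s h

lemma coveringNumber_mono {δ : ℝ} {A B : Set ℝ} (h : A ⊆ B) :
    coveringNumber δ A ≤ coveringNumber δ B :=
  le_iInf₂ fun s hs => iInf₂_le s (h.trans hs)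

lemma coveringNumber_closure {δ : ℝ} {A : Set ℝ} :
    coveringNumber δ (closure A) = coveringNumber δ A := by
  refine le_antisymm (le_iInf₂ fun s hs => iInf₂_le s ?_) (coveringNumber_mono subset_closure)
  exact closure_minimal hs (isClosed_biUnion_finset fun x _ => Metric.isClosed_closedBall)

lemma exists_min_cover {δ : ℝ} {A : Set ℝ} (h : coveringNumber δ A ≠ ⊤) :
    ∃ s : Finset ℝ, (A ⊆ ⋃ x ∈ s, Metric.closedBall x δ) ∧
      (s.card : ℕ∞) = coveringNumber δ A := by
  have hne : ∃ s : Finset ℝ, A ⊆ ⋃ x ∈ s, Metric.closedBall x δ := by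
    by_contra hc
    push_neg at hc
    apply h
    rw [_root_.coveringNumber]
    simp only [iInf_eq_top]
    intro s hs; exact absurd hs (hc s)
  obtain ⟨s, hs⟩ := hne
  set T : Set ℕ := {m : ℕ | ∃ t : Finset ℝ, (A ⊆ ⋃ x ∈ t, Metric.closedBall x δ) ∧ t.card = m}
  have hTne : T.Nonempty := ⟨s.card, s, hs, rfl⟩
  obtain ⟨t, ht, htc⟩ := Nat.sInf_mem hTne
  refine ⟨t, ht, le_antisymm ?_ (coveringNumber_le_of_cover ht)⟩
  refine le_iInf₂ fun u hu => ?_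
  have : sInf T ≤ u.card := Nat.sInf_le ⟨u, hu, rfl⟩
  rw [htc]
  exact_mod_cast this

lemma exists_cover_Icc {u ℓ δ : ℝ} {m : ℕ} (hδ : 0 < δ) (hm : 1 ≤ m) (hℓ : ℓ ≤ 2*δ*m) :
    ∃ s : Finset ℝ, s.card ≤ m ∧ Set.Icc u (u+ℓ) ⊆ ⋃ x ∈ s, Metric.closedBall x δ := by
  refine ⟨(Finset.range m).image (fun i : ℕ => u + δ + 2*δ*i), ?_, ?_⟩
  · exact (Finset.card_image_le).trans (by simp)
  · intro x hx
    obtain ⟨hx1, hx2⟩ := hx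
    set i : ℕ := min ⌊(x - u)/(2*δ)⌋₊ (m-1) with hi
    have him : i < m := by
      have : m - 1 < m := Nat.sub_lt (by omega) one_pos
      exact lt_of_le_of_lt (min_le_right _ _) this
    refine Set.mem_biUnion (Finset.mem_image.2 ⟨i, Finset.mem_range.2 him, rfl⟩) ?_
    rw [Metric.mem_closedBall, Real.dist_eq, abs_le]
    have h2δ : 0 < 2*δ := by linarith
    have hxu : 0 ≤ x - u := by linarith
    constructor
    · have : 2*δ*i ≤ x - u := by
        rcases le_or_gt ((⌊(x - u)/(2*δ)⌋₊ : ℕ)) (m-1) with h | h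
        · have hle : i ≤ ⌊(x - u)/(2*δ)⌋₊ := min_le_left _ _
          have hle' : (i : ℝ) ≤ (⌊(x - u)/(2*δ)⌋₊ : ℝ) := Nat.cast_le.2 hle
          calc 2*δ*i ≤ 2*δ*⌊(x - u)/(2*δ)⌋₊ := by nlinarith
            _ ≤ 2*δ*((x-u)/(2*δ)) := by
                have := Nat.floor_le (a := (x - u)/(2*δ)) (by positivity); nlinarith
            _ = x - u := by field_simp
        · have him1 : i = m - 1 := min_eq_right h.le
          have h1 : ((m : ℝ) - 1) ≤ ⌊(x - u)/(2*δ)⌋₊ := by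
            have h' : (m : ℕ) ≤ ⌊(x - u)/(2*δ)⌋₊ := by omega
            have : (m : ℝ) ≤ (⌊(x - u)/(2*δ)⌋₊ : ℝ) := Nat.cast_le.2 h'
            linarith
          have h2 : (⌊(x - u)/(2*δ)⌋₊ : ℝ) ≤ (x-u)/(2*δ) := Nat.floor_le (by positivity)
          have h3 : ((i : ℝ)) = (m : ℝ) - 1 := by
            rw [him1, Nat.cast_sub hm]; simp
          rw [h3]
          have : ((m:ℝ) - 1) * (2*δ) ≤ x - u := by
            calc ((m:ℝ)-1) * (2*δ) ≤ ((x-u)/(2*δ)) * (2*δ) := by nlinarith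
              _ = x - u := by field_simp
          nlinarith
      linarith
    · have : x - u ≤ 2*δ*(i+1) := by
        rcases le_or_gt ((⌊(x - u)/(2*δ)⌋₊ : ℕ)) (m-1) with h | h
        · have hieq : i = ⌊(x - u)/(2*δ)⌋₊ := min_eq_left h
          have h2 : (x-u)/(2*δ) < (⌊(x - u)/(2*δ)⌋₊ : ℝ) + 1 := Nat.lt_floor_add_one _
          rw [hieq]
          calc x - u = ((x-u)/(2*δ))*(2*δ) := by field_simp
            _ ≤ ((⌊(x - u)/(2*δ)⌋₊ : ℝ) + 1)*(2*δ) := by nlinarith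
            _ = 2*δ*((⌊(x - u)/(2*δ)⌋₊:ℝ)+1) := by ring
        · have him1 : i = m - 1 := min_eq_right h.le
          have h3 : ((i : ℝ)) + 1 = (m : ℝ) := by
            rw [him1, Nat.cast_sub hm]; simp
          rw [h3]; linarith
      linarith

lemma card_le_of_separated {α : Type*} {s : Finset α} {f : α → ℝ} {w W sep : ℝ} {m : ℕ}
    (hsep : 0 < sep) (hW : W < sep * m)
    (hmem : ∀ x ∈ s, f x ∈ Set.Icc w (w + W))
    (hs : ∀ x ∈ s, ∀ y ∈ s, x ≠ y → sep ≤ |f x - f y|) :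
    s.card ≤ m := by
  have hinj : Set.InjOn (fun x => ⌊(f x - w)/sep⌋₊) s := by
    intro x hx y hy hxy
    by_contra hne
    have h1 := hs x hx y hy hne
    have hfx := hmem x hx
    have hfy := hmem y hy
    have hx0 : 0 ≤ (f x - w)/sep := div_nonneg (by linarith [hfx.1]) hsep.le
    have hy0 : 0 ≤ (f y - w)/sep := div_nonneg (by linarith [hfy.1]) hsep.le
    simp only at hxy
    have b1 : (⌊(f x - w)/sep⌋₊ : ℝ) ≤ (f x - w)/sep := Nat.floor_le hx0
    have b2 : (f x - w)/sep < ⌊(f x - w)/sep⌋₊ + 1 := Nat.lt_floor_add_one _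
    have b3 : (⌊(f y - w)/sep⌋₊ : ℝ) ≤ (f y - w)/sep := Nat.floor_le hy0
    have b4 : (f y - w)/sep < ⌊(f y - w)/sep⌋₊ + 1 := Nat.lt_floor_add_one _
    rw [hxy] at b1 b2
    have habs : |(f x - w)/sep - (f y - w)/sep| < 1 := by
      rw [abs_lt]; constructor <;> nlinarith
    have heq : (f x - w)/sep - (f y - w)/sep = (f x - f y)/sep := by ring
    rw [heq, abs_div, abs_of_pos hsep] at habs
    have : |f x - f y| < sep := by
      rw [div_lt_one hsep] at habs; exact habs
    linarith
  calc s.card = ((s : Finset α).image (fun x => ⌊(f x - w)/sep⌋₊)).card :=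
        (Finset.card_image_of_injOn hinj).symm
    _ ≤ (Finset.range m).card := by
        apply Finset.card_le_card
        intro b hb
        obtain ⟨x, hx, rfl⟩ := Finset.mem_image.1 hb
        refine Finset.mem_range.2 ?_
        have hfx := hmem x hx
        have : (f x - w)/sep < m := by
          rw [div_lt_iff₀ hsep]
          nlinarith [hfx.2]
        exact (Nat.floor_lt (div_nonneg (by linarith [hfx.1]) hsep.le)).2 this
    _ = m := by simp

end Covering

section Words

lemma validWord_nil (n : ℕ → ℕ) : ValidWord n [] := fun j hj => by simp at hj

lemma validWord_append_single {n : ℕ → ℕ} {σ : List ℕ} {j : ℕ}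
    (h : ValidWord n σ) (h1 : 1 ≤ j) (h2 : j ≤ n (σ.length + 1)) :
    ValidWord n (σ ++ [j]) := by
  intro i hi
  simp only [List.length_append, List.length_singleton] at hi
  rcases lt_or_ge i σ.length with hlt | hge
  · rw [List.getD_append _ _ _ _ hlt]
    exact h i hlt
  · have : i = σ.length := by omega
    subst this
    rw [List.getD_append_right _ _ _ _ hge]
    simp [h1, h2]

lemma validWord_of_prefix {n : ℕ → ℕ} {σ τ : List ℕ}
    (h : ValidWord n (σ ++ τ)) : ValidWord n σ := by
  intro i hi
  have h2 : i < (σ ++ τ).length := by simp; omega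
  have := h i h2
  rwa [List.getD_append _ _ _ _ hi] at this

lemma validWord_last {n : ℕ → ℕ} {σ : List ℕ} {j : ℕ}
    (h : ValidWord n (σ ++ [j])) : 1 ≤ j ∧ j ≤ n (σ.length + 1) := by
  have hl : σ.length < (σ ++ [j]).length := by simp
  have := h σ.length hl
  rwa [List.getD_append_right _ _ _ _ (le_refl _), Nat.sub_self] at this

lemma validWord_take {n : ℕ → ℕ} {σ : List ℕ} (h : ValidWord n σ) (m : ℕ) :
    ValidWord n (σ.take m) := by
  have := List.take_append_drop m σ
  exact validWord_of_prefix (by rw [this]; exact h)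

lemma validWord_append_replicate_one {n : ℕ → ℕ} (hn : ∀ k, 1 ≤ k → 1 ≤ n k)
    {σ : List ℕ} (h : ValidWord n σ) (m : ℕ) :
    ValidWord n (σ ++ List.replicate m 1) := by
  induction m with
  | zero => simpa using h
  | succ m ih =>
      have : σ ++ List.replicate (m+1) 1 = (σ ++ List.replicate m 1) ++ [1] := by
        simp [List.replicate_succ']
      rw [this]
      exact validWord_append_single ih le_rfl (hn _ (by omega))

end Words

/-! ### Geometry of the basic intervals -/

namespace HPS

variable (S : HPS)

/-- the common length of the level-`k` basic intervals (normalized) -/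
def len (k : ℕ) : ℝ := ∏ j ∈ Finset.Icc 1 k, S.c j

lemma len_zero : S.len 0 = 1 := by simp [len]

lemma len_succ (k : ℕ) : S.len (k+1) = S.len k * S.c (k+1) := by
  rw [len, len, Finset.prod_Icc_succ_top (by omega)]

lemma len_pos (k : ℕ) : 0 < S.len k :=
  Finset.prod_pos fun j hj => S.hc j (Finset.mem_Icc.1 hj).1

lemma c_le_half (k : ℕ) (hk : 1 ≤ k) : S.c k ≤ 1/2 := by
  have h1 := S.hnc k hk
  have h2 := S.hn k hk
  have h3 := S.hc k hk
  have : (2 : ℝ) ≤ (S.n k : ℝ) := by exact_mod_cast h2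
  nlinarith

lemma len_le (k : ℕ) : S.len k ≤ (1/2)^k := by
  induction k with
  | zero => simp [len_zero]
  | succ k ih =>
      rw [len_succ, pow_succ]
      have := S.c_le_half (k+1) (by omega)
      have := S.len_pos k
      have : (0:ℝ) < (1/2)^k := by positivity
      nlinarith [S.len_pos k, S.c_le_half (k+1) (by omega), (S.hc (k+1) (by omega)).le]

lemma length_eq (hnorm : S.b ([] : List ℕ) - S.a [] = 1) :
    ∀ σ : List ℕ, ValidWord S.n σ → S.b σ - S.a σ = S.len σ.length := by
  intro σ
  induction σ using List.reverseRecOn with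
  | nil => intro _; simpa [len_zero] using hnorm
  | append_singleton σ j ih =>
      intro h
      have hσ : ValidWord S.n σ := validWord_of_prefix h
      obtain ⟨hj1, hj2⟩ := validWord_last h
      have := S.struct.ratio σ hσ j hj1 hj2
      rw [this, ih hσ]
      simp only [List.length_append, List.length_singleton]
      rw [len_succ]
      ring

lemma a_lt_b (hnorm : S.b ([] : List ℕ) - S.a [] = 1) {σ : List ℕ}
    (h : ValidWord S.n σ) : S.a σ < S.b σ := by
  have := S.length_eq hnorm σ h
  have := S.len_pos σ.length
  linarith

lemma child_subset {σ : List ℕ} (h : ValidWord S.n σ) {j : ℕ}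
    (hj1 : 1 ≤ j) (hj2 : j ≤ S.n (σ.length + 1))
    (hnorm : S.b ([] : List ℕ) - S.a [] = 1) :
    S.a σ ≤ S.a (σ ++ [j]) ∧ S.b (σ ++ [j]) ≤ S.b σ := by
  have hsub := S.struct.sub σ h j hj1 hj2
  have hc : ValidWord S.n (σ ++ [j]) := validWord_append_single h hj1 hj2
  have hab := (S.a_lt_b hnorm hc).le
  have h1 : S.a (σ ++ [j]) ∈ Set.Icc (S.a σ) (S.b σ) := hsub ⟨le_refl _, hab⟩
  have h2 : S.b (σ ++ [j]) ∈ Set.Icc (S.a σ) (S.b σ) := hsub ⟨hab, le_refl _⟩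
  exact ⟨h1.1, h2.2⟩

/-- increments between consecutive children -/
lemma child_increment (hnorm : S.b ([] : List ℕ) - S.a [] = 1)
    {σ : List ℕ} (h : ValidWord S.n σ) {l : ℕ} (hl1 : 1 ≤ l)
    (hl2 : l + 1 ≤ S.n (σ.length + 1)) :
    S.a (σ ++ [l+1]) - S.a (σ ++ [l]) =
      S.c (σ.length + 1) * S.len σ.length + S.ξ (σ.length + 1) l := by
  have h1 := S.struct.gapl σ h l hl1 hl2
  have h2 := S.struct.ratio σ h l hl1 (by omega)
  rw [S.length_eq hnorm σ h] at h2
  linarith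

lemma ξ_inner_nonneg {k l : ℕ} (hk : 1 ≤ k) (hl : l ≤ S.n k) : 0 ≤ S.ξ k l :=
  S.hξ k hk l hl

lemma a_child_mono (hnorm : S.b ([] : List ℕ) - S.a [] = 1)
    {σ : List ℕ} (h : ValidWord S.n σ) {j j' : ℕ} (hj1 : 1 ≤ j) (hjj : j ≤ j')
    (hj2 : j' ≤ S.n (σ.length + 1)) :
    S.a (σ ++ [j]) ≤ S.a (σ ++ [j']) := by
  induction j' , hjj using Nat.le_induction with
  | base => exact le_refl _
  | succ j' hjj ih =>
      have h1 : S.a (σ ++ [j]) ≤ S.a (σ ++ [j']) := ih (by omega)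
      have h2 := S.child_increment hnorm h (l := j') (by omega) (by omega)
      have h3 : 0 ≤ S.c (σ.length + 1) * S.len σ.length := by
        have := S.hc (σ.length+1) (by omega)
        have := S.len_pos σ.length
        positivity
      have h4 : 0 ≤ S.ξ (σ.length + 1) j' := S.ξ_inner_nonneg (by omega) (by omega)
      linarith

lemma b_le_a_child (hnorm : S.b ([] : List ℕ) - S.a [] = 1)
    {σ : List ℕ} (h : ValidWord S.n σ) {j j' : ℕ} (hj1 : 1 ≤ j) (hjj : j < j')
    (hj2 : j' ≤ S.n (σ.length + 1)) :
    S.b (σ ++ [j]) ≤ S.a (σ ++ [j']) := by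
  have h1 := S.struct.ord σ h j hj1 (by omega)
  have h2 := S.a_child_mono hnorm h (j := j+1) (j' := j') (by omega) (by omega) hj2
  linarith

end HPS

namespace HPS

variable (S : HPS)

/-- children lie in the trimmed interval -/
lemma child_trimmed (hnorm : S.b ([] : List ℕ) - S.a [] = 1)
    {σ : List ℕ} (h : ValidWord S.n σ) {j : ℕ} (hj1 : 1 ≤ j)
    (hj2 : j ≤ S.n (σ.length + 1)) :
    S.a σ + S.ξ (σ.length + 1) 0 ≤ S.a (σ ++ [j]) ∧
      S.b (σ ++ [j]) ≤ S.b σ - S.ξ (σ.length + 1) (S.n (σ.length + 1)) := by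
  have hn2 : 2 ≤ S.n (σ.length + 1) := S.hn _ (by omega)
  constructor
  · have h0 := S.struct.gap0 σ h
    have h1 := S.a_child_mono hnorm h (j := 1) (j' := j) le_rfl hj1 hj2
    linarith
  · have hn := S.struct.gapn σ h
    have hle : S.b (σ ++ [j]) ≤ S.b (σ ++ [S.n (σ.length + 1)]) := by
      rcases eq_or_lt_of_le hj2 with he | hlt
      · rw [he]
      · have h1 := S.b_le_a_child hnorm h hj1 hlt (le_refl _)
        have hc : ValidWord S.n (σ ++ [S.n (σ.length + 1)]) :=
          validWord_append_single h (by omega) le_rfl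
        have h2 := (S.a_lt_b hnorm hc).le
        linarith
    linarith

/-- nesting along prefixes -/
lemma prefix_subset (hnorm : S.b ([] : List ℕ) - S.a [] = 1) :
    ∀ (ρ σ : List ℕ), ValidWord S.n (σ ++ ρ) →
      Set.Icc (S.a (σ ++ ρ)) (S.b (σ ++ ρ)) ⊆ Set.Icc (S.a σ) (S.b σ) := by
  intro ρ
  induction ρ using List.reverseRecOn with
  | nil => intro σ h; simp
  | append_singleton ρ j ih =>
      intro σ h
      have hassoc : σ ++ (ρ ++ [j]) = (σ ++ ρ) ++ [j] := by simp
      rw [hassoc]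
      rw [hassoc] at h
      have hpre : ValidWord S.n (σ ++ ρ) := validWord_of_prefix h
      obtain ⟨hj1, hj2⟩ := validWord_last h
      exact (S.struct.sub (σ ++ ρ) hpre j hj1 hj2).trans (ih σ hpre)

/-- telescoping: position of the `j`-th child -/
lemma a_child_eq (hnorm : S.b ([] : List ℕ) - S.a [] = 1)
    {σ : List ℕ} (h : ValidWord S.n σ) :
    ∀ j, 1 ≤ j → j ≤ S.n (σ.length + 1) →
      S.a (σ ++ [j]) = S.a σ + S.ξ (σ.length + 1) 0 +
        (j - 1 : ℕ) * (S.c (σ.length + 1) * S.len σ.length) +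
        ∑ l ∈ Finset.Icc 1 (j-1), S.ξ (σ.length + 1) l := by
  intro j hj1 hj2
  induction j with
  | zero => omega
  | succ j ih =>
      rcases Nat.eq_or_lt_of_le hj1 with he | hlt
      · have hj0 : j = 0 := by omega
        subst hj0
        have hg := S.struct.gap0 σ h
        have hicc : Finset.Icc 1 (0+1-1) = (∅ : Finset ℕ) := rfl
        rw [hicc]
        simp
        linarith
      · have hj : 1 ≤ j := by omega
        have hje := ih hj (by omega)
        have hinc := S.child_increment hnorm h (l := j) hj (by omega)
        have hs : ∑ l ∈ Finset.Icc 1 (j+1-1), S.ξ (σ.length + 1) l =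
            (∑ l ∈ Finset.Icc 1 (j-1), S.ξ (σ.length + 1) l) + S.ξ (σ.length + 1) j := by
          have : j + 1 - 1 = (j - 1) + 1 := by omega
          rw [this, Finset.sum_Icc_succ_top (by omega)]
          congr 2
          omega
        have hcast : ((j + 1 - 1 : ℕ) : ℝ) = ((j - 1 : ℕ) : ℝ) + 1 := by
          have : (j + 1 - 1 : ℕ) = (j - 1) + 1 := by omega
          rw [this]; push_cast; ring
        rw [hs, hcast]
        have : S.a (σ ++ [j+1]) = S.a (σ ++ [j]) +
            (S.c (σ.length + 1) * S.len σ.length + S.ξ (σ.length + 1) j) := by linarith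
        rw [this, hje]
        ring

/-- the gap/length accounting identity at each level -/
lemma len_identity (hnorm : S.b ([] : List ℕ) - S.a [] = 1) (k : ℕ) :
    S.len k - S.ξ (k+1) 0 - S.ξ (k+1) (S.n (k+1)) =
      (S.n (k+1) : ℝ) * (S.c (k+1) * S.len k) +
        ∑ l ∈ Finset.Icc 1 (S.n (k+1) - 1), S.ξ (k+1) l := by
  set σ : List ℕ := List.replicate k 1 with hσ
  have hσv : ValidWord S.n σ := by
    have := validWord_append_replicate_one (n := S.n)
      (fun k hk => le_trans (by omega) (S.hn k hk)) (validWord_nil S.n) k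
    simpa using this
  have hσl : σ.length = k := by simp [hσ]
  have hn2 : 2 ≤ S.n (k+1) := S.hn _ (by omega)
  have hn2' : 2 ≤ S.n (σ.length + 1) := by rw [hσl]; exact hn2
  have hlast := S.a_child_eq hnorm hσv (S.n (σ.length + 1)) (by omega) le_rfl
  have hratio := S.struct.ratio σ hσv (S.n (σ.length + 1)) (by omega) le_rfl
  have hgapn := S.struct.gapn σ hσv
  have hlen := S.length_eq hnorm σ hσv
  rw [hσl] at hlast hratio hgapn hlen
  have hcast : ((S.n (k+1) - 1 : ℕ) : ℝ) = (S.n (k+1) : ℝ) - 1 := by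
    rw [Nat.cast_sub (by omega)]; simp
  rw [hlen] at hratio
  -- b σ = a σ + len k ; b (σ++[n]) = a(σ++[n]) + c * len k ; b σ - b(σ++[n]) = ξ n
  have : S.b σ = S.a σ + S.len k := by linarith
  rw [hcast] at hlast
  linarith

/-- `h_k`, the trimmed length divided by `n_{k+1}` -/
def hk (k : ℕ) : ℝ :=
  (S.len k - S.ξ (k+1) 0 - S.ξ (k+1) (S.n (k+1))) / (S.n (k+1) : ℝ)

lemma n_pos (k : ℕ) (hk : 1 ≤ k) : (0:ℝ) < (S.n k : ℝ) := by
  have := S.hn k hk; exact_mod_cast by omega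

lemma sum_inner_nonneg (k : ℕ) :
    0 ≤ ∑ l ∈ Finset.Icc 1 (S.n (k+1) - 1), S.ξ (k+1) l := by
  apply Finset.sum_nonneg
  intro l hl
  obtain ⟨h1, h2⟩ := Finset.mem_Icc.1 hl
  exact S.ξ_inner_nonneg (by omega) (by omega)

lemma hk_eq (hnorm : S.b ([] : List ℕ) - S.a [] = 1) (k : ℕ) :
    S.hk k = S.c (k+1) * S.len k +
      (∑ l ∈ Finset.Icc 1 (S.n (k+1) - 1), S.ξ (k+1) l) / (S.n (k+1) : ℝ) := by
  rw [hk, S.len_identity hnorm k]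
  have hn := S.n_pos (k+1) (by omega)
  field_simp

lemma hk_pos (hnorm : S.b ([] : List ℕ) - S.a [] = 1) (k : ℕ) : 0 < S.hk k := by
  rw [S.hk_eq hnorm k]
  have h1 : 0 < S.c (k+1) * S.len k := by
    have := S.hc (k+1) (by omega); have := S.len_pos k; positivity
  have h2 := S.sum_inner_nonneg k
  have hn := S.n_pos (k+1) (by omega)
  have : 0 ≤ (∑ l ∈ Finset.Icc 1 (S.n (k+1) - 1), S.ξ (k+1) l) / (S.n (k+1) : ℝ) :=
    div_nonneg h2 hn.le
  linarith

lemma c_len_le_hk (hnorm : S.b ([] : List ℕ) - S.a [] = 1) (k : ℕ) :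
    S.c (k+1) * S.len k ≤ S.hk k := by
  rw [S.hk_eq hnorm k]
  have h2 := S.sum_inner_nonneg k
  have hn := S.n_pos (k+1) (by omega)
  have : 0 ≤ (∑ l ∈ Finset.Icc 1 (S.n (k+1) - 1), S.ξ (k+1) l) / (S.n (k+1) : ℝ) :=
    div_nonneg h2 hn.le
  linarith

lemma hk_num_pos (hnorm : S.b ([] : List ℕ) - S.a [] = 1) (k : ℕ) :
    0 < S.len k - S.ξ (k+1) 0 - S.ξ (k+1) (S.n (k+1)) := by
  have h := S.hk_pos hnorm k
  rw [hk] at h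
  have hn := S.n_pos (k+1) (by omega)
  by_contra h'
  push_neg at h'
  have := div_nonpos_of_nonpos_of_nonneg h' hn.le
  linarith

lemma hk_le_half_len (hnorm : S.b ([] : List ℕ) - S.a [] = 1) (k : ℕ) :
    S.hk k ≤ S.len k / 2 := by
  have hn2 : (2:ℝ) ≤ (S.n (k+1) : ℝ) := by exact_mod_cast S.hn _ (by omega)
  have hn := S.n_pos (k+1) (by omega)
  have hnum := S.hk_num_pos hnorm k
  have hnum_le : S.len k - S.ξ (k+1) 0 - S.ξ (k+1) (S.n (k+1)) ≤ S.len k := by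
    have h0 := S.ξ_inner_nonneg (k := k+1) (l := 0) (by omega) (by omega)
    have hn' := S.ξ_inner_nonneg (k := k+1) (l := S.n (k+1)) (by omega) le_rfl
    linarith
  have hpos := S.hk_pos hnorm k
  have heq : S.hk k * (S.n (k+1) : ℝ) = S.len k - S.ξ (k+1) 0 - S.ξ (k+1) (S.n (k+1)) := by
    rw [hk]; field_simp
  nlinarith

lemma hk_succ_le (hnorm : S.b ([] : List ℕ) - S.a [] = 1) (k : ℕ) :
    S.hk (k+1) ≤ S.hk k / 2 := by
  have h1 := S.hk_le_half_len hnorm (k+1)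
  have h3 := S.c_len_le_hk hnorm k
  rw [S.len_succ k] at h1
  linarith [mul_comm (S.len k) (S.c (k+1)), h1, h3]

lemma hk_le_pow (hnorm : S.b ([] : List ℕ) - S.a [] = 1) (k : ℕ) :
    S.hk k ≤ (1/2)^(k+1) := by
  induction k with
  | zero =>
      have := S.hk_le_half_len hnorm 0
      rw [len_zero] at this
      norm_num at this ⊢
      linarith
  | succ k ih =>
      have h1 := S.hk_succ_le hnorm k
      have : (1/2 : ℝ)^(k+1+1) = (1/2)^(k+1)/2 := by ring
      rw [this]
      linarith

lemma hk_lt_hk (hnorm : S.b ([] : List ℕ) - S.a [] = 1) (k : ℕ) :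
    S.hk (k+1) < S.hk k := by
  have h1 := S.hk_succ_le hnorm k
  have h2 := S.hk_pos hnorm (k+1)
  linarith

lemma hk_anti (hnorm : S.b ([] : List ℕ) - S.a [] = 1) :
    StrictAnti S.hk :=
  strictAnti_nat_of_succ_lt (fun k => S.hk_lt_hk hnorm k)

lemma hk_tendsto (hnorm : S.b ([] : List ℕ) - S.a [] = 1) :
    Filter.Tendsto S.hk Filter.atTop (nhds 0) := by
  apply squeeze_zero (fun k => (S.hk_pos hnorm k).le) (fun k => S.hk_le_pow hnorm k)
  have h : Filter.Tendsto (fun k : ℕ => (1/2 : ℝ)^k) Filter.atTop (nhds 0) := by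
    apply tendsto_pow_atTop_nhds_zero_of_lt_one <;> norm_num
  have := h.comp (Filter.tendsto_add_atTop_nat 1)
  simpa [Function.comp_def] using this

/-- the χ-comparability separation estimate -/
lemma sep_lower {χ : ℝ} (hχ : 1 ≤ χ) (hgap : GapComparable S χ)
    (hnorm : S.b ([] : List ℕ) - S.a [] = 1) (k : ℕ) {l : ℕ}
    (hl1 : 1 ≤ l) (hl2 : l ≤ S.n (k+1) - 1) :
    S.hk k / χ ≤ S.c (k+1) * S.len k + S.ξ (k+1) l := by
  have hχ0 : 0 < χ := by linarith
  have hn2 : 2 ≤ S.n (k+1) := S.hn _ (by omega)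
  have hξl : 0 ≤ S.ξ (k+1) l := S.ξ_inner_nonneg (by omega) (by omega)
  have hsum : ∑ l' ∈ Finset.Icc 1 (S.n (k+1) - 1), S.ξ (k+1) l' ≤
      ((S.n (k+1) - 1 : ℕ) : ℝ) * (χ * S.ξ (k+1) l) := by
    have h := Finset.sum_le_card_nsmul (Finset.Icc 1 (S.n (k+1) - 1))
      (fun l' => S.ξ (k+1) l') (χ * S.ξ (k+1) l)
      (fun l' hl' => by
        obtain ⟨h1, h2⟩ := Finset.mem_Icc.1 hl'
        exact hgap (k+1) (by omega) l' l h1 h2 hl1 hl2)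
    rw [Nat.card_Icc] at h
    simpa [nsmul_eq_mul] using h
  have hcard : ((S.n (k+1) - 1 : ℕ) : ℝ) ≤ (S.n (k+1) : ℝ) := by
    exact_mod_cast Nat.sub_le _ _
  have hn0 : (0:ℝ) < (S.n (k+1) : ℝ) := S.n_pos (k+1) (by omega)
  have hcL : 0 ≤ S.c (k+1) * S.len k := by
    have := S.hc (k+1) (by omega); have := S.len_pos k; positivity
  have hkeq := S.hk_eq hnorm k
  have hsn := S.sum_inner_nonneg k
  -- hk ≤ cL + (n-1)χξ/n ≤ cL + χξ ≤ χ(cL + ξ)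
  have h1 : S.hk k ≤ S.c (k+1) * S.len k + χ * S.ξ (k+1) l := by
    rw [hkeq]
    have : (∑ l' ∈ Finset.Icc 1 (S.n (k+1) - 1), S.ξ (k+1) l') / (S.n (k+1) : ℝ) ≤
        χ * S.ξ (k+1) l := by
      rw [div_le_iff₀ hn0]
      calc ∑ l' ∈ Finset.Icc 1 (S.n (k+1) - 1), S.ξ (k+1) l'
          ≤ ((S.n (k+1) - 1 : ℕ) : ℝ) * (χ * S.ξ (k+1) l) := hsum
        _ ≤ (S.n (k+1) : ℝ) * (χ * S.ξ (k+1) l) := by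
              have hχξ : 0 ≤ χ * S.ξ (k+1) l := mul_nonneg hχ0.le hξl
              nlinarith [hχξ, hcard]
        _ = χ * S.ξ (k+1) l * (S.n (k+1) : ℝ) := by ring
    linarith
  have h2 : S.c (k+1) * S.len k + χ * S.ξ (k+1) l ≤
      χ * (S.c (k+1) * S.len k + S.ξ (k+1) l) := by nlinarith
  rw [div_le_iff₀ hχ0]
  calc S.hk k ≤ χ * (S.c (k+1) * S.len k + S.ξ (k+1) l) := le_trans h1 h2
    _ = (S.c (k+1) * S.len k + S.ξ (k+1) l) * χ := by ring

/-- basic intervals at the same level are `len k`-separated (left endpoints) -/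
lemma a_separated (hnorm : S.b ([] : List ℕ) - S.a [] = 1) :
    ∀ (k : ℕ) (σ σ' : List ℕ), ValidWord S.n σ → ValidWord S.n σ' →
      σ.length = k → σ'.length = k → σ ≠ σ' →
      S.len k ≤ |S.a σ - S.a σ'| := by
  intro k
  induction k with
  | zero =>
      intro σ σ' _ _ h1 h2 hne
      exfalso
      exact hne (by rw [List.length_eq_zero_iff] at h1 h2; rw [h1, h2])
  | succ k ih =>
      -- wlog via a helper on ordered pairs
      have key : ∀ (σ σ' : List ℕ), ValidWord S.n σ → ValidWord S.n σ' →
          σ.length = k+1 → σ'.length = k+1 → σ ≠ σ' → S.a σ ≤ S.a σ' →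
          S.len (k+1) ≤ S.a σ' - S.a σ := by
        intro σ σ' hv hv' hl hl' hne hle
        obtain ⟨τ, j, rfl⟩ : ∃ τ j, σ = τ ++ [j] := by
          rcases List.eq_nil_or_concat σ with h | ⟨τ, j, h⟩
          · rw [h] at hl; simp at hl
          · exact ⟨τ, j, by rw [h, List.concat_eq_append]⟩
        obtain ⟨τ', j', rfl⟩ : ∃ τ j, σ' = τ ++ [j] := by
          rcases List.eq_nil_or_concat σ' with h | ⟨τ, j, h⟩
          · rw [h] at hl'; simp at hl'
          · exact ⟨τ, j, by rw [h, List.concat_eq_append]⟩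
        have hτ : ValidWord S.n τ := validWord_of_prefix hv
        have hτ' : ValidWord S.n τ' := validWord_of_prefix hv'
        have hτl : τ.length = k := by simp at hl; omega
        have hτl' : τ'.length = k := by simp at hl'; omega
        obtain ⟨hj1, hj2⟩ := validWord_last hv
        obtain ⟨hj1', hj2'⟩ := validWord_last hv'
        rw [hτl] at hj2
        rw [hτl'] at hj2'
        by_cases hττ : τ = τ'
        · subst hττ
          have hjj : j ≠ j' := fun h => hne (by rw [h])
          -- a mono in j, so j < j' given a σ ≤ a σ'
          rcases lt_or_gt_of_ne hjj with hlt | hgt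
          · have hinc := S.child_increment hnorm hτ (l := j) hj1 (by rw [hτl]; omega)
            have hmono := S.a_child_mono hnorm hτ (j := j+1) (j' := j')
              (by omega) (by omega) (by rw [hτl]; omega)
            have hξ : 0 ≤ S.ξ (τ.length + 1) j :=
              S.ξ_inner_nonneg (by omega) (by rw [hτl]; omega)
            have : S.len (k+1) = S.c (k+1) * S.len k := by
              rw [S.len_succ k]; ring
            rw [this]
            rw [hτl] at hinc hξ
            linarith
          · -- then a σ' < a σ contradicting order unless equal; show a σ' + len ≤ a σ
            exfalso
            have hinc := S.child_increment hnorm hτ (l := j') hj1' (by rw [hτl]; omega)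
            have hmono := S.a_child_mono hnorm hτ (j := j'+1) (j' := j)
              (by omega) (by omega) (by rw [hτl]; omega)
            have hξ : 0 ≤ S.ξ (τ.length + 1) j' :=
              S.ξ_inner_nonneg (by omega) (by rw [hτl]; omega)
            rw [hτl] at hξ
            have hc : 0 < S.c (k+1) * S.len k := by
              have := S.hc (k+1) (by omega); have := S.len_pos k; positivity
            rw [hτl] at hinc
            linarith
        · have hsep := ih τ τ' hτ hτ' hτl hτl' hττ
          have hsub := S.child_subset hτ hj1 (by rw [hτl]; exact hj2) hnorm
          have hsub' := S.child_subset hτ' hj1' (by rw [hτl']; exact hj2') hnorm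
          have hlenτ := S.length_eq hnorm τ hτ
          have hlenτ' := S.length_eq hnorm τ' hτ'
          rw [hτl] at hlenτ
          rw [hτl'] at hlenτ'
          have hlen1 := S.length_eq hnorm _ hv
          rw [hl] at hlen1
          rcases abs_cases (S.a τ - S.a τ') with ⟨he, _⟩ | ⟨he, _⟩
          · -- a τ - a τ' ≥ len k  : τ' is to the left
            rw [he] at hsep
            -- b τ' = a τ' + len k ≤ a τ ≤ a (τ++[j]) ; and σ' ⊆ τ' so a σ' ≤ b τ'
            -- but we assumed a σ ≤ a σ' — so: a σ' ≥ a σ ≥ a τ ≥ a τ' + len k = b τ'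
            have hbσ' : S.b (τ' ++ [j']) ≤ S.b τ' := hsub'.2
            have hlσ' := S.length_eq hnorm _ hv'
            rw [hl'] at hlσ'
            -- a σ' + len(k+1) = b σ' ≤ b τ' = a τ' + len k ≤ a τ ≤ a σ ≤ a σ'
            have : S.b τ' = S.a τ' + S.len k := by linarith
            have h1 : S.a (τ' ++ [j']) + S.len (k+1) ≤ S.a τ' + S.len k := by linarith
            have h2 : S.a τ' + S.len k ≤ S.a τ := by linarith
            have h3 : S.a τ ≤ S.a (τ ++ [j]) := hsub.1
            linarith
          · rw [he] at hsep
            -- a τ' - a τ ≥ len k : b τ = a τ + len k ≤ a τ' ≤ a σ'; a σ ≤ b τ - len(k+1)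
            have hbσ : S.b (τ ++ [j]) ≤ S.b τ := hsub.2
            have hlσ := S.length_eq hnorm _ hv
            rw [hl] at hlσ
            have : S.b τ = S.a τ + S.len k := by linarith
            have h1 : S.a (τ ++ [j]) + S.len (k+1) ≤ S.a τ + S.len k := by linarith
            have h2 : S.a τ + S.len k ≤ S.a τ' := by linarith
            have h3 : S.a τ' ≤ S.a (τ' ++ [j']) := hsub'.1
            linarith
      intro σ σ' hv hv' hl hl' hne
      rcases le_total (S.a σ) (S.a σ') with h | h
      · have := key σ σ' hv hv' hl hl' hne h
        rw [abs_sub_comm, abs_of_nonneg (by linarith)]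
        linarith
      · have := key σ' σ hv' hv hl' hl (Ne.symm hne) h
        rw [abs_of_nonneg (by linarith)]
        linarith

end HPS

/-- the finset of valid extensions of `τ` by `i` more letters -/
def HPS.ext (S : HPS) (τ : List ℕ) : ℕ → Finset (List ℕ)
  | 0 => {τ}
  | (i+1) => ((HPS.ext S τ i) ×ˢ Finset.Icc 1 (S.n (τ.length + i + 1))).image
      (fun p => p.1 ++ [p.2])

namespace HPS

variable (S : HPS)

lemma length_of_mem_ext {τ : List ℕ} : ∀ {i : ℕ} {ρ : List ℕ}, ρ ∈ S.ext τ i →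
    ρ.length = τ.length + i := by
  intro i
  induction i with
  | zero => intro ρ h; simp [ext] at h; simp [h]
  | succ i ih =>
      intro ρ h
      simp only [ext, Finset.mem_image] at h
      obtain ⟨⟨p, j⟩, hp, rfl⟩ := h
      obtain ⟨hp1, _⟩ := Finset.mem_product.1 hp
      have := ih hp1
      simp only [List.length_append, List.length_singleton, this]
      omega

lemma prefix_of_mem_ext {τ : List ℕ} : ∀ {i : ℕ} {ρ : List ℕ}, ρ ∈ S.ext τ i →
    ∃ γ, ρ = τ ++ γ := by
  intro i
  induction i with
  | zero => intro ρ h; simp [ext] at h; exact ⟨[], by simp [h]⟩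
  | succ i ih =>
      intro ρ h
      simp only [ext, Finset.mem_image] at h
      obtain ⟨⟨p, j⟩, hp, rfl⟩ := h
      obtain ⟨hp1, _⟩ := Finset.mem_product.1 hp
      obtain ⟨γ, rfl⟩ := ih hp1
      exact ⟨γ ++ [j], by simp⟩

lemma valid_of_mem_ext {τ : List ℕ} (hτ : ValidWord S.n τ) :
    ∀ {i : ℕ} {ρ : List ℕ}, ρ ∈ S.ext τ i → ValidWord S.n ρ := by
  intro i
  induction i with
  | zero => intro ρ h; simp [ext] at h; rwa [h]
  | succ i ih =>
      intro ρ h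
      simp only [ext, Finset.mem_image] at h
      obtain ⟨⟨p, j⟩, hp, rfl⟩ := h
      obtain ⟨hp1, hp2⟩ := Finset.mem_product.1 hp
      obtain ⟨hj1, hj2⟩ := Finset.mem_Icc.1 hp2
      have hlen := S.length_of_mem_ext hp1
      exact validWord_append_single (ih hp1) hj1 (by rw [hlen]; exact hj2)

lemma card_ext (τ : List ℕ) : ∀ i : ℕ,
    (S.ext τ i).card = ∏ j ∈ Finset.Ioc τ.length (τ.length + i), S.n j := by
  intro i
  induction i with
  | zero => simp [ext]
  | succ i ih =>
      have hinj : Set.InjOn (fun p : List ℕ × ℕ => p.1 ++ [p.2])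
          ↑((S.ext τ i) ×ˢ Finset.Icc 1 (S.n (τ.length + i + 1))) := by
        rintro ⟨p1, j1⟩ hp ⟨p2, j2⟩ hq heq
        simp only at heq
        obtain ⟨hp1, _⟩ := Finset.mem_product.1 (Finset.mem_coe.1 hp)
        obtain ⟨hq1, _⟩ := Finset.mem_product.1 (Finset.mem_coe.1 hq)
        have hl : p1.length = p2.length := by
          rw [S.length_of_mem_ext hp1, S.length_of_mem_ext hq1]
        obtain ⟨h1, h2⟩ := List.append_inj heq hl
        simp at h2
        exact Prod.ext h1 h2
      have hcard : (S.ext τ (i+1)).card =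
          ((S.ext τ i) ×ˢ Finset.Icc 1 (S.n (τ.length + i + 1))).card := by
        show (Finset.image _ _).card = _
        exact Finset.card_image_of_injOn hinj
      rw [hcard, Finset.card_product, ih, Nat.card_Icc]
      have h2 : S.n (τ.length + i + 1) + 1 - 1 = S.n (τ.length + i + 1) := by omega
      rw [h2]
      have h3 : τ.length + (i+1) = (τ.length + i) + 1 := by omega
      rw [h3, Finset.prod_Ioc_succ_top (by omega)]

lemma mem_ext_of {τ : List ℕ} : ∀ {i : ℕ} {ρ : List ℕ}, ValidWord S.n ρ →
    ρ.length = τ.length + i → (∃ γ, ρ = τ ++ γ) → ρ ∈ S.ext τ i := by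
  intro i
  induction i with
  | zero =>
      intro ρ _ hlen hpre
      obtain ⟨γ, rfl⟩ := hpre
      have hγ : γ = [] := by
        simp at hlen
        exact hlen
      simp [hγ, ext]
  | succ i ih =>
      intro ρ hv hlen hpre
      obtain ⟨γ, hγ⟩ := hpre
      have hne : ρ ≠ [] := by
        intro h; rw [h] at hlen; simp at hlen
      obtain ⟨ρ', j, hρ'⟩ := (List.eq_nil_or_concat ρ).resolve_left hne
      rw [List.concat_eq_append] at hρ'
      have hγne : γ ≠ [] := by
        intro h; rw [h] at hγ; simp at hγ; rw [hγ] at hlen; omega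
      obtain ⟨γ', j₂, hγ'⟩ := (List.eq_nil_or_concat γ).resolve_left hγne
      rw [List.concat_eq_append] at hγ'
      have heq : (τ ++ γ') ++ [j₂] = ρ' ++ [j] := by
        rw [List.append_assoc, ← hγ', ← hγ, hρ']
      have hρl : ρ'.length = τ.length + i := by
        rw [hρ'] at hlen; simp at hlen; omega
      have hl2 : (τ ++ γ').length = ρ'.length := by
        have := congrArg List.length heq
        simp at this
        simp
        omega
      obtain ⟨h1, h2⟩ := List.append_inj heq hl2
      simp at h2
      subst hρ'
      have hρ'v : ValidWord S.n ρ' := validWord_of_prefix hv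
      have hmem : ρ' ∈ S.ext τ i := ih hρ'v hρl ⟨γ', h1.symm⟩
      obtain ⟨hj1, hj2⟩ := validWord_last hv
      rw [hρl] at hj2
      show ρ' ++ [j] ∈ Finset.image _ _
      rw [Finset.mem_image]
      refine ⟨(ρ', j), Finset.mem_product.2 ⟨hmem, Finset.mem_Icc.2 ⟨hj1, ?_⟩⟩, rfl⟩
      subst h2
      exact hj2

lemma mem_Ek (k : ℕ) {σ : List ℕ} (h1 : σ.length = k) (h2 : ValidWord S.n σ)
    {x : ℝ} (h3 : x ∈ Set.Icc (S.a σ) (S.b σ)) : x ∈ S.Ek k :=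
  Set.mem_biUnion (Set.mem_setOf.2 ⟨h1, h2⟩) h3

lemma Ek_eq (k : ℕ) :
    S.Ek k = ⋃ σ ∈ (↑(S.ext [] k) : Set (List ℕ)), Set.Icc (S.a σ) (S.b σ) := by
  ext x
  simp only [Ek, Set.mem_iUnion, Set.mem_setOf_eq, Finset.mem_coe, exists_prop]
  constructor
  · rintro ⟨σ, ⟨hl, hv⟩, hx⟩
    exact ⟨σ, S.mem_ext_of hv (by simpa using hl) ⟨σ, by simp⟩, hx⟩
  · rintro ⟨σ, hσ, hx⟩
    refine ⟨σ, ⟨by simpa using S.length_of_mem_ext hσ,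
      S.valid_of_mem_ext (validWord_nil _) hσ⟩, hx⟩

lemma isClosed_Ek (k : ℕ) : IsClosed (S.Ek k) := by
  rw [Ek_eq]
  exact Set.Finite.isClosed_biUnion (Finset.finite_toSet _) (fun σ _ => isClosed_Icc)

lemma isClosed_E : IsClosed S.E :=
  isClosed_iInter (fun k => S.isClosed_Ek k)

lemma E_subset_Ek (k : ℕ) : S.E ⊆ S.Ek k := Set.iInter_subset _ k

/-- every basic interval contains a point of `E` -/
lemma E_inter_nonempty (hnorm : S.b ([] : List ℕ) - S.a [] = 1)
    {ρ : List ℕ} (hρ : ValidWord S.n ρ) :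
    (S.E ∩ Set.Icc (S.a ρ) (S.b ρ)).Nonempty := by
  set K : ℕ → Set ℝ := fun m =>
    Set.Icc (S.a (ρ ++ List.replicate m 1)) (S.b (ρ ++ List.replicate m 1)) with hK
  have hvm : ∀ m, ValidWord S.n (ρ ++ List.replicate m 1) := fun m =>
    validWord_append_replicate_one (fun k hk => le_trans (by omega) (S.hn k hk)) hρ m
  have hdec : ∀ m, K (m+1) ⊆ K m := by
    intro m
    have hrep : ρ ++ List.replicate (m+1) 1 = (ρ ++ List.replicate m 1) ++ [1] := by
      simp [List.replicate_succ']
    rw [hK]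
    simp only
    rw [hrep]
    exact S.struct.sub _ (hvm m) 1 le_rfl (le_trans (by omega) (S.hn _ (by omega)))
  have hne : ∀ m, (K m).Nonempty := fun m =>
    Set.nonempty_Icc.2 (S.a_lt_b hnorm (hvm m)).le
  obtain ⟨x, hx⟩ := IsCompact.nonempty_iInter_of_sequence_nonempty_isCompact_isClosed
    K hdec hne isCompact_Icc (fun m => isClosed_Icc)
  have hxm : ∀ m, x ∈ K m := Set.mem_iInter.1 hx
  have hx0 : x ∈ Set.Icc (S.a ρ) (S.b ρ) := by simpa [hK] using hxm 0
  refine ⟨x, ?_, hx0⟩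
  apply Set.mem_iInter.2
  intro k
  rcases le_or_gt ρ.length k with hle | hlt
  · exact S.mem_Ek k (by simp; omega) (hvm (k - ρ.length)) (hxm (k - ρ.length))
  · refine S.mem_Ek k (by simp; omega) (validWord_take hρ k) ?_
    have hsplit : ρ.take k ++ ρ.drop k = ρ := List.take_append_drop k ρ
    have := S.prefix_subset hnorm (ρ.drop k) (ρ.take k) (by rw [hsplit]; exact hρ)
    rw [hsplit] at this
    exact this hx0

end HPS

namespace HPS

variable (S : HPS)

/-- trimmed level-`k` interval length -/
lemma trimmed_len (hnorm : S.b ([] : List ℕ) - S.a [] = 1) (k : ℕ) :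
    S.len k - S.ξ (k+1) 0 - S.ξ (k+1) (S.n (k+1)) = (S.n (k+1) : ℝ) * S.hk k := by
  rw [hk]
  have := S.n_pos (k+1) (by omega)
  field_simp

/-- upper covering bound: at scale δ with n_{k+1} h_k ≤ 2δm,
`E` is covered by `N_k · m` balls. -/
lemma covering_upper (hnorm : S.b ([] : List ℕ) - S.a [] = 1) (k : ℕ) {δ : ℝ}
    (hδ : 0 < δ) {m : ℕ} (hm : 1 ≤ m)
    (hcov : (S.n (k+1) : ℝ) * S.hk k ≤ 2*δ*m) :
    coveringNumber δ S.E ≤ (((S.ext [] k).card * m : ℕ) : ℕ∞) := by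
  set ℓ : ℝ := (S.n (k+1) : ℝ) * S.hk k with hℓ
  have hcover : ∀ σ : List ℕ, ∃ s : Finset ℝ, s.card ≤ m ∧
      Set.Icc (S.a σ + S.ξ (k+1) 0) ((S.a σ + S.ξ (k+1) 0) + ℓ) ⊆
        ⋃ x ∈ s, Metric.closedBall x δ :=
    fun σ => exists_cover_Icc hδ hm hcov
  choose cov hcovcard hcovsub using hcover
  set t : Finset ℝ := (S.ext [] k).biUnion cov with ht
  have htcard : t.card ≤ (S.ext [] k).card * m := by
    refine (Finset.card_biUnion_le).trans ?_
    calc ∑ σ ∈ S.ext [] k, (cov σ).card ≤ ∑ σ ∈ S.ext [] k, m :=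
          Finset.sum_le_sum (fun σ _ => hcovcard σ)
      _ = (S.ext [] k).card * m := by rw [Finset.sum_const, smul_eq_mul]
  have hsub : S.E ⊆ ⋃ x ∈ t, Metric.closedBall x δ := by
    intro x hx
    have hx1 : x ∈ S.Ek (k+1) := S.E_subset_Ek (k+1) hx
    rw [Ek_eq] at hx1
    simp only [Set.mem_iUnion, Finset.mem_coe, exists_prop] at hx1
    obtain ⟨ρ, hρ, hxρ⟩ := hx1
    have : ρ ∈ ((S.ext [] k) ×ˢ Finset.Icc 1 (S.n (([] : List ℕ).length + k + 1))).image
        (fun p : List ℕ × ℕ => p.1 ++ [p.2]) := hρ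
    rw [Finset.mem_image] at this
    obtain ⟨⟨σ, j⟩, hmem, rfl⟩ := this
    obtain ⟨hσ, hj⟩ := Finset.mem_product.1 hmem
    obtain ⟨hj1, hj2⟩ := Finset.mem_Icc.1 hj
    have hσv : ValidWord S.n σ := S.valid_of_mem_ext (validWord_nil _) hσ
    have hσl : σ.length = k := by simpa using S.length_of_mem_ext hσ
    have hj2' : j ≤ S.n (σ.length + 1) := by rw [hσl]; simpa using hj2
    have htrim := S.child_trimmed hnorm hσv hj1 hj2'
    have hlenσ := S.length_eq hnorm σ hσv
    rw [hσl] at htrim hlenσ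
    have hup : S.a σ + S.ξ (k+1) 0 + ℓ = S.b σ - S.ξ (k+1) (S.n (k+1)) := by
      rw [hℓ, ← S.trimmed_len hnorm k]
      linarith
    have hxin : x ∈ Set.Icc (S.a σ + S.ξ (k+1) 0) ((S.a σ + S.ξ (k+1) 0) + ℓ) := by
      rw [hup]
      exact ⟨le_trans htrim.1 hxρ.1, le_trans hxρ.2 htrim.2⟩
    have := hcovsub σ hxin
    simp only [Set.mem_iUnion, Finset.mem_coe, exists_prop] at this
    obtain ⟨c, hc1, hc2⟩ := this
    exact Set.mem_biUnion (Finset.mem_biUnion.2 ⟨σ, hσ, hc1⟩) hc2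
  calc coveringNumber δ S.E ≤ (t.card : ℕ∞) := coveringNumber_le_of_cover hsub
    _ ≤ (((S.ext [] k).card * m : ℕ) : ℕ∞) := by exact_mod_cast htcard

end HPS

namespace HPS

variable (S : HPS)

open Classical in
/-- a canonical point of `E` in each basic interval -/
def pt (hnorm : S.b ([] : List ℕ) - S.a [] = 1) (ρ : List ℕ) : ℝ :=
  if h : ValidWord S.n ρ then (S.E_inter_nonempty hnorm h).choose else 0

lemma pt_mem (hnorm : S.b ([] : List ℕ) - S.a [] = 1) {ρ : List ℕ}
    (h : ValidWord S.n ρ) :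
    S.pt hnorm ρ ∈ S.E ∩ Set.Icc (S.a ρ) (S.b ρ) := by
  classical
  rw [pt]
  rw [dif_pos h]
  exact (S.E_inter_nonempty hnorm h).choose_spec

/-- lower covering bound at scale `h_m` for `E ∩ I_τ` -/
lemma covering_lower (hnorm : S.b ([] : List ℕ) - S.a [] = 1) {χ : ℝ} (hχ : 1 ≤ χ)
    (hgap : GapComparable S χ) {τ : List ℕ} (hτ : ValidWord S.n τ) {m : ℕ}
    (hm : τ.length ≤ m) :
    (((S.ext τ (m + 1 - τ.length)).card : ℕ) : ℕ∞) ≤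
      ((3 * (⌊3*χ⌋₊ + 1) : ℕ) : ℕ∞) *
        coveringNumber (S.hk m) (S.E ∩ Set.Icc (S.a τ) (S.b τ)) := by
  classical
  set δ : ℝ := S.hk m with hδdef
  set r : ℕ := 3 * (⌊3*χ⌋₊ + 1) with hr
  by_cases hfin : coveringNumber δ (S.E ∩ Set.Icc (S.a τ) (S.b τ)) = ⊤
  · rw [hfin, ENat.mul_top (by simp [hr])]
    exact le_top
  obtain ⟨s, hs, hscard⟩ := exists_min_cover hfin
  set P : Finset (List ℕ) := S.ext τ (m + 1 - τ.length) with hP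
  have hδpos : 0 < δ := S.hk_pos hnorm m
  have hχ0 : 0 < χ := by linarith
  have hcL : 0 < S.c (m+1) * S.len m := by
    have := S.hc (m+1) (by omega); have := S.len_pos m; positivity
  have hcLδ : S.c (m+1) * S.len m ≤ δ := S.c_len_le_hk hnorm m
  -- facts about members of P
  have hPfact : ∀ ρ ∈ P, ValidWord S.n ρ ∧ ρ.length = m + 1 ∧
      S.pt hnorm ρ ∈ S.E ∩ Set.Icc (S.a τ) (S.b τ) ∧
      S.pt hnorm ρ ∈ Set.Icc (S.a ρ) (S.b ρ) := by
    intro ρ hρ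
    have hv : ValidWord S.n ρ := S.valid_of_mem_ext hτ hρ
    have hl : ρ.length = m + 1 := by
      have := S.length_of_mem_ext hρ; omega
    have hpt := S.pt_mem hnorm hv
    refine ⟨hv, hl, ⟨hpt.1, ?_⟩, hpt.2⟩
    obtain ⟨γ, rfl⟩ := S.prefix_of_mem_ext hρ
    exact S.prefix_subset hnorm γ τ hv hpt.2
  have hPsub : P ⊆ s.biUnion
      (fun x => P.filter (fun ρ => S.pt hnorm ρ ∈ Metric.closedBall x δ)) := by
    intro ρ hρ
    have := hs (hPfact ρ hρ).2.2.1
    simp only [Set.mem_iUnion, exists_prop] at this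
    obtain ⟨x, hx, hmem⟩ := this
    exact Finset.mem_biUnion.2 ⟨x, hx, Finset.mem_filter.2 ⟨hρ, hmem⟩⟩
  -- the fiber bound
  have hfiber : ∀ x : ℝ,
      (P.filter (fun ρ => S.pt hnorm ρ ∈ Metric.closedBall x δ)).card ≤ r := by
    intro x
    set F := P.filter (fun ρ => S.pt hnorm ρ ∈ Metric.closedBall x δ) with hF
    have hdecomp : ∀ ρ ∈ F, ∃ σ j, ρ = σ ++ [j] ∧ ValidWord S.n σ ∧ σ.length = m ∧
        1 ≤ j ∧ j ≤ S.n (m+1) ∧ ρ.dropLast = σ ∧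
        S.pt hnorm ρ ∈ Set.Icc (S.a ρ) (S.b ρ) ∧ |S.pt hnorm ρ - x| ≤ δ := by
      intro ρ hρ
      obtain ⟨hρP, hball⟩ := Finset.mem_filter.1 hρ
      obtain ⟨hv, hl, _, hpt⟩ := hPfact ρ hρP
      have hne : ρ ≠ [] := by intro h; rw [h] at hl; simp at hl
      obtain ⟨σ, j, hσj⟩ := (List.eq_nil_or_concat ρ).resolve_left hne
      rw [List.concat_eq_append] at hσj
      have hσv : ValidWord S.n σ := validWord_of_prefix (hσj ▸ hv)
      have hσl : σ.length = m := by rw [hσj] at hl; simp at hl; omega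
      obtain ⟨hj1, hj2⟩ := validWord_last (hσj ▸ hv)
      rw [hσl] at hj2
      rw [Metric.mem_closedBall, Real.dist_eq] at hball
      exact ⟨σ, j, hσj, hσv, hσl, hj1, hj2, by rw [hσj]; simp, hpt, hball⟩
    set Q := F.image List.dropLast with hQ
    have hQfact : ∀ σ ∈ Q, ValidWord S.n σ ∧ σ.length = m ∧
        S.a σ ∈ Set.Icc (x - δ - S.len m) ((x - δ - S.len m) + (2*δ + S.len m)) := by
      intro σ hσ
      obtain ⟨ρ, hρF, hdrop⟩ := Finset.mem_image.1 hσ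
      obtain ⟨σ', j, hρeq, hσv, hσl, hj1, hj2, hdrop', hpt, hball⟩ := hdecomp ρ hρF
      subst hρeq
      have hσeq : σ = σ' := by rw [← hdrop, hdrop']
      subst hσeq
      refine ⟨hσv, hσl, ?_⟩
      have hsub := S.child_subset hσv hj1 (by rw [hσl]; exact hj2) hnorm
      have hblen := S.length_eq hnorm σ hσv
      rw [hσl] at hblen
      have h1 : S.a σ ≤ S.pt hnorm (σ ++ [j]) := le_trans hsub.1 hpt.1
      have h2 : S.pt hnorm (σ ++ [j]) ≤ S.a σ + S.len m := by
        have h3 := le_trans hpt.2 hsub.2; linarith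
      have habs := abs_le.1 hball
      exact Set.mem_Icc.2 ⟨by linarith [habs.1, habs.2], by linarith [habs.1, habs.2]⟩
    have hQcard : Q.card ≤ 3 := by
      apply card_le_of_separated (f := S.a) (w := x - δ - S.len m)
        (W := 2*δ + S.len m) (sep := S.len m) (S.len_pos m)
      · have h1 := S.hk_le_half_len hnorm m
        have h2 := S.len_pos m
        push_cast
        nlinarith
      · exact fun σ hσ => (hQfact σ hσ).2.2
      · intro σ hσ σ' hσ' hne
        exact S.a_separated hnorm m σ σ' (hQfact σ hσ).1 (hQfact σ' hσ').1
          (hQfact σ hσ).2.1 (hQfact σ' hσ').2.1 hne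
    have hfibercard : ∀ σ ∈ Q, (F.filter (fun ρ => ρ.dropLast = σ)).card ≤ ⌊3*χ⌋₊ + 1 := by
      intro σ hσ
      obtain ⟨hσv, hσl, _⟩ := hQfact σ hσ
      have hGfact : ∀ ρ ∈ F.filter (fun ρ => ρ.dropLast = σ), ∃ j,
          ρ = σ ++ [j] ∧ 1 ≤ j ∧ j ≤ S.n (m+1) ∧
          S.a ρ ∈ Set.Icc (x - δ - S.c (m+1) * S.len m)
            ((x - δ - S.c (m+1) * S.len m) + (2*δ + S.c (m+1) * S.len m)) := by
        intro ρ hρ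
        obtain ⟨hρF, hdropσ⟩ := Finset.mem_filter.1 hρ
        obtain ⟨σ', j, hρeq, hσv', hσl', hj1, hj2, hdrop', hpt, hball⟩ := hdecomp ρ hρF
        have hσeq : σ' = σ := by rw [← hdropσ, hdrop']
        subst hσeq
        refine ⟨j, hρeq, hj1, hj2, ?_⟩
        have hblen := S.length_eq hnorm ρ (hρeq ▸ validWord_append_single hσv hj1
          (by rw [hσl]; exact hj2) : ValidWord S.n ρ)
        have hρl : ρ.length = m + 1 := by rw [hρeq]; simp [hσl]
        rw [hρl] at hblen
        have hlsucc : S.len (m+1) = S.len m * S.c (m+1) := S.len_succ m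
        have h1 : S.a ρ ≤ S.pt hnorm ρ := hpt.1
        have h2 : S.pt hnorm ρ ≤ S.a ρ + S.c (m+1) * S.len m := by
          have h3 := hpt.2
          have h4 : S.len m * S.c (m+1) = S.c (m+1) * S.len m := mul_comm _ _
          linarith [hblen, hlsucc]
        have habs := abs_le.1 hball
        exact Set.mem_Icc.2 ⟨by linarith [habs.1, habs.2], by linarith [habs.1, habs.2]⟩
      apply card_le_of_separated (f := S.a) (w := x - δ - S.c (m+1) * S.len m)
        (W := 2*δ + S.c (m+1) * S.len m) (sep := δ/χ) (div_pos hδpos hχ0)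
      · -- W < (δ/χ) * (⌊3χ⌋+1)
        have h1 : (3*χ : ℝ) < (⌊3*χ⌋₊ + 1 : ℕ) := by
          push_cast
          exact Nat.lt_floor_add_one _
        have h2 : 3*δ < (δ/χ) * ((⌊3*χ⌋₊ + 1 : ℕ) : ℝ) := by
          rw [div_mul_eq_mul_div, lt_div_iff₀ hχ0]
          nlinarith
        linarith
      · exact fun ρ hρ => (hGfact ρ hρ).choose_spec.2.2.2
      · intro ρ hρ ρ' hρ' hne
        obtain ⟨j, hρeq, hj1, hj2, _⟩ := hGfact ρ hρ
        obtain ⟨j', hρeq', hj1', hj2', _⟩ := hGfact ρ' hρ'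
        have hjj : j ≠ j' := by
          intro h; apply hne; rw [hρeq, hρeq', h]
        have key : ∀ u u' : ℕ, 1 ≤ u → u < u' → u' ≤ S.n (m+1) →
            δ/χ ≤ S.a (σ ++ [u']) - S.a (σ ++ [u]) := by
          intro u u' hu1 huu hu2
          have hinc := S.child_increment hnorm hσv (l := u) hu1 (by rw [hσl]; omega)
          have hmono := S.a_child_mono hnorm hσv (j := u+1) (j' := u')
            (by omega) (by omega) (by rw [hσl]; omega)
          have hseplow := S.sep_lower hχ hgap hnorm m (l := u) hu1 (by
            have hn2 := S.hn (m+1) (by omega); omega)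
          rw [hσl] at hinc
          linarith
        have hδχpos : (0:ℝ) < δ/χ := div_pos hδpos hχ0
        rw [hρeq, hρeq']
        rcases lt_or_gt_of_ne hjj with h | h
        · have := key j j' hj1 h hj2'
          rw [abs_sub_comm, abs_of_nonneg (by linarith)]
          linarith
        · have := key j' j hj1' h hj2
          rw [abs_of_nonneg (by linarith)]
          linarith
    calc F.card = ∑ σ ∈ Q, (F.filter (fun ρ => ρ.dropLast = σ)).card :=
          Finset.card_eq_sum_card_fiberwise (fun ρ hρ => Finset.mem_image_of_mem _ hρ)
      _ ≤ ∑ σ ∈ Q, (⌊3*χ⌋₊ + 1) := Finset.sum_le_sum hfibercard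
      _ = Q.card * (⌊3*χ⌋₊ + 1) := by rw [Finset.sum_const, smul_eq_mul]
      _ ≤ 3 * (⌊3*χ⌋₊ + 1) := Nat.mul_le_mul_right _ hQcard
      _ = r := hr.symm
  -- assemble
  have hPcard : P.card ≤ s.card * r := by
    calc P.card ≤ (s.biUnion
          (fun x => P.filter (fun ρ => S.pt hnorm ρ ∈ Metric.closedBall x δ))).card :=
          Finset.card_le_card hPsub
      _ ≤ ∑ x ∈ s, (P.filter (fun ρ => S.pt hnorm ρ ∈ Metric.closedBall x δ)).card :=
          Finset.card_biUnion_le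
      _ ≤ ∑ x ∈ s, r := Finset.sum_le_sum (fun x _ => hfiber x)
      _ = s.card * r := by rw [Finset.sum_const, smul_eq_mul]
  calc ((P.card : ℕ) : ℕ∞) ≤ ((s.card * r : ℕ) : ℕ∞) := by exact_mod_cast hPcard
    _ = (r : ℕ∞) * (s.card : ℕ∞) := by push_cast; ring
    _ = (r : ℕ∞) * coveringNumber δ (S.E ∩ Set.Icc (S.a τ) (S.b τ)) := by rw [hscard]

end HPS

section MoreCovering

lemma one_le_coveringNumber {δ : ℝ} {A : Set ℝ} (hne : A.Nonempty) :
    1 ≤ coveringNumber δ A := by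
  refine le_iInf₂ fun s hs => ?_
  rcases Finset.eq_empty_or_nonempty s with rfl | hsne
  · obtain ⟨x, hx⟩ := hne
    have := hs hx
    simp at this
  · have : 1 ≤ s.card := Finset.card_pos.2 hsne
    exact_mod_cast this

lemma coveringNumber_ne_top {A : Set ℝ} {u v δ : ℝ} (h : A ⊆ Set.Icc u v)
    (hδ : 0 < δ) : coveringNumber δ A ≠ ⊤ := by
  set ℓ : ℝ := max (v - u) 0 with hℓ
  set m : ℕ := ⌊ℓ/(2*δ)⌋₊ + 1 with hm
  have hℓ0 : 0 ≤ ℓ := le_max_right _ _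
  have hcov : ℓ ≤ 2*δ*m := by
    have h1 : ℓ/(2*δ) < (⌊ℓ/(2*δ)⌋₊ : ℝ) + 1 := Nat.lt_floor_add_one _
    have h2 : 0 < 2*δ := by linarith
    have h3 : (m:ℝ) = (⌊ℓ/(2*δ)⌋₊ : ℝ) + 1 := by rw [hm]; push_cast; ring
    rw [div_lt_iff₀ h2] at h1
    nlinarith [h1, h3]
  obtain ⟨s, _, hsub⟩ := exists_cover_Icc hδ (by omega) hcov
  have hA : A ⊆ ⋃ x ∈ s, Metric.closedBall x δ := by
    refine Set.Subset.trans (fun x hx => ?_) hsub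
    obtain ⟨h1, h2⟩ := h hx
    exact ⟨h1, by have := le_max_left (v-u) 0; linarith⟩
  exact ne_top_of_le_ne_top (by simp) (coveringNumber_le_of_cover hA)

lemma log_nat_mono {x y : ℕ} (h : x ≤ y) : Real.log x ≤ Real.log y := by
  rcases Nat.eq_zero_or_pos x with rfl | hx
  · simp only [Nat.cast_zero, Real.log_zero]
    rcases Nat.eq_zero_or_pos y with rfl | hy
    · simp
    · exact Real.log_nonneg (by exact_mod_cast hy)
  · exact Real.log_le_log (by exact_mod_cast hx) (by exact_mod_cast h)

end MoreCovering

namespace HPS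

variable (S : HPS)

/-- `N_k = n₁⋯n_k` -/
def Nk (k : ℕ) : ℕ := ∏ j ∈ Finset.Icc 1 k, S.n j

lemma Nk_pos (k : ℕ) : 0 < S.Nk k :=
  Finset.prod_pos fun j hj => lt_of_lt_of_le (by omega) (S.hn j (Finset.mem_Icc.1 hj).1)

lemma Nk_succ (k : ℕ) : S.Nk (k+1) = S.Nk k * S.n (k+1) := by
  rw [Nk, Nk, Finset.prod_Icc_succ_top (by omega)]

lemma two_le_Nk_succ (k : ℕ) : 2 ≤ S.Nk (k+1) := by
  have h1 : S.n 1 ≤ S.Nk (k+1) :=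
    Finset.single_le_prod' (fun j hj => by
      have := S.hn j (Finset.mem_Icc.1 hj).1; omega) (Finset.mem_Icc.2 ⟨le_rfl, by omega⟩)
  have := S.hn 1 le_rfl
  omega

lemma ext_nil_card (k : ℕ) : (S.ext [] k).card = S.Nk k := by
  have := S.card_ext ([] : List ℕ) k
  simpa [Nk, ← Finset.Icc_add_one_left_eq_Ioc] using this

lemma ext_card_mul {τ : List ℕ} {k m : ℕ} (hτl : τ.length = k) (hm : k ≤ m) :
    S.Nk k * (S.ext τ (m + 1 - k)).card = S.Nk (m+1) := by
  have hcard := S.card_ext τ (m + 1 - k)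
  rw [hτl] at hcard
  have h1 : k + (m + 1 - k) = m + 1 := by omega
  rw [h1] at hcard
  have hio : ∀ x : ℕ, Finset.Icc 1 x = Finset.Ioc 0 x := fun x => by
    ext t; simp only [Finset.mem_Icc, Finset.mem_Ioc]; omega
  rw [hcard, Nk, Nk, hio, hio]
  exact Finset.prod_Ioc_consecutive _ (by omega) (by omega)

lemma Nk_len_le_one (k : ℕ) : (S.Nk k : ℝ) * S.len k ≤ 1 := by
  induction k with
  | zero => simp [Nk, len_zero]
  | succ k ih =>
      rw [Nk_succ, len_succ]
      push_cast
      have h1 := S.hnc (k+1) (by omega)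
      have h2 := S.hc (k+1) (by omega)
      have h3 := S.len_pos k
      have h4 : (0:ℝ) < S.Nk k := by exact_mod_cast S.Nk_pos k
      have h5 : (0:ℝ) ≤ (S.n (k+1) : ℝ) := by positivity
      calc (S.Nk k : ℝ) * (S.n (k+1) : ℝ) * (S.len k * S.c (k+1))
          = ((S.Nk k : ℝ) * S.len k) * ((S.n (k+1) : ℝ) * S.c (k+1)) := by ring
        _ ≤ 1 * 1 := by
            apply mul_le_mul ih h1.le (by positivity) (by norm_num)
        _ = 1 := by norm_num

/-- the sequence whose limsup is the packing dimension -/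
def sq (k : ℕ) : ℝ := Real.log (S.Nk (k+1)) / (- Real.log (S.hk k))

lemma sq_eq (k : ℕ) : S.sq k =
    Real.log (∏ j ∈ Finset.Icc 1 (k + 1), (S.n j : ℝ)) /
      (-Real.log
        (((∏ j ∈ Finset.Icc 1 k, S.c j) - S.ξ (k + 1) 0 -
            S.ξ (k + 1) (S.n (k + 1))) / (S.n (k + 1) : ℝ))) := by
  rw [sq, hk, len, Nk]
  push_cast
  rfl

lemma log_Nk_pos (k : ℕ) : 0 < Real.log (S.Nk (k+1)) := by
  apply Real.log_pos
  have := S.two_le_Nk_succ k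
  exact_mod_cast by omega

lemma log_Nk_le (hnorm : S.b ([] : List ℕ) - S.a [] = 1) (k : ℕ) :
    Real.log (S.Nk (k+1)) ≤ - Real.log (S.hk k) := by
  have hhk := S.hk_pos hnorm k
  have hNk : (0:ℝ) < S.Nk (k+1) := by exact_mod_cast S.Nk_pos (k+1)
  have hprod : (S.Nk (k+1) : ℝ) * S.hk k ≤ 1 := by
    have h1 : (S.Nk (k+1) : ℝ) = (S.Nk k : ℝ) * (S.n (k+1) : ℝ) := by
      rw [Nk_succ]; push_cast; ring
    have h2 : (S.n (k+1) : ℝ) * S.hk k = S.len k - S.ξ (k+1) 0 - S.ξ (k+1) (S.n (k+1)) :=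
      (S.trimmed_len hnorm k).symm
    have h3 : S.len k - S.ξ (k+1) 0 - S.ξ (k+1) (S.n (k+1)) ≤ S.len k := by
      have h0 := S.ξ_inner_nonneg (k := k+1) (l := 0) (by omega) (by omega)
      have hn' := S.ξ_inner_nonneg (k := k+1) (l := S.n (k+1)) (by omega) le_rfl
      linarith
    have h4 : (0:ℝ) < S.Nk k := by exact_mod_cast S.Nk_pos k
    calc (S.Nk (k+1) : ℝ) * S.hk k = (S.Nk k : ℝ) * ((S.n (k+1) : ℝ) * S.hk k) := by
          rw [h1]; ring
      _ ≤ (S.Nk k : ℝ) * S.len k := by rw [h2]; nlinarith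
      _ ≤ 1 := S.Nk_len_le_one k
  have hlog : Real.log ((S.Nk (k+1) : ℝ) * S.hk k) ≤ 0 :=
    Real.log_nonpos (by positivity) hprod
  rw [Real.log_mul (by positivity) (by positivity)] at hlog
  linarith

lemma neg_log_hk_pos (hnorm : S.b ([] : List ℕ) - S.a [] = 1) (k : ℕ) :
    0 < - Real.log (S.hk k) :=
  lt_of_lt_of_le (S.log_Nk_pos k) (S.log_Nk_le hnorm k)

lemma neg_log_hk_ge (hnorm : S.b ([] : List ℕ) - S.a [] = 1) (k : ℕ) :
    (k+1 : ℝ) * Real.log 2 ≤ - Real.log (S.hk k) := by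
  have h1 := S.hk_le_pow hnorm k
  have h2 := S.hk_pos hnorm k
  have h3 : Real.log (S.hk k) ≤ Real.log ((1/2)^(k+1)) := Real.log_le_log h2 h1
  rw [Real.log_pow] at h3
  have h4 : Real.log (1/2 : ℝ) = - Real.log 2 := by
    rw [one_div, Real.log_inv]
  rw [h4] at h3
  push_cast at h3 ⊢
  linarith

lemma sq_pos (hnorm : S.b ([] : List ℕ) - S.a [] = 1) (k : ℕ) : 0 < S.sq k :=
  div_pos (S.log_Nk_pos k) (S.neg_log_hk_pos hnorm k)

lemma sq_le_one (hnorm : S.b ([] : List ℕ) - S.a [] = 1) (k : ℕ) : S.sq k ≤ 1 := by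
  rw [sq, div_le_one (S.neg_log_hk_pos hnorm k)]
  exact S.log_Nk_le hnorm k

lemma E_subset_I0 : S.E ⊆ Set.Icc (S.a []) (S.b []) := by
  intro x hx
  have := S.E_subset_Ek 0 hx
  simp only [Ek, Set.mem_iUnion, Set.mem_setOf_eq, exists_prop] at this
  obtain ⟨σ, ⟨hl, _⟩, hx'⟩ := this
  rw [List.length_eq_zero_iff] at hl
  rwa [hl] at hx'

lemma E_nonempty (hnorm : S.b ([] : List ℕ) - S.a [] = 1) : S.E.Nonempty := by
  obtain ⟨x, hx, _⟩ := S.E_inter_nonempty hnorm (validWord_nil S.n)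
  exact ⟨x, hx⟩

end HPS

namespace HPS

variable (S : HPS)

/-- the key upper estimate: for `h_K ≤ δ < h_{K-1}`, the covering ratio is at most
`max (sq K) (sq (K-1))`. -/
lemma ratio_le (hnorm : S.b ([] : List ℕ) - S.a [] = 1) {K : ℕ} (hK : 1 ≤ K) {δ : ℝ}
    (h1 : S.hk K ≤ δ) (h2 : δ < S.hk (K-1)) :
    Real.log (((coveringNumber δ S.E).toNat : ℕ) : ℝ) / (-Real.log δ) ≤
      max (S.sq K) (S.sq (K-1)) := by
  have hδ : 0 < δ := lt_of_lt_of_le (S.hk_pos hnorm K) h1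
  have hδ1 : δ < 1 := by
    have := S.hk_le_pow hnorm (K-1)
    have h3 : ((1:ℝ)/2)^(K-1+1) ≤ 1 := by
      apply pow_le_one₀ <;> norm_num
    linarith
  have hlogδ : 0 < - Real.log δ := by
    have := Real.log_neg hδ hδ1
    linarith
  have hlogδ2 : - Real.log δ ≥ - Real.log (S.hk (K-1)) := by
    have := Real.log_le_log hδ h2.le
    linarith
  have hlogδ3 : - Real.log δ ≤ - Real.log (S.hk K) := by
    have := Real.log_le_log (S.hk_pos hnorm K) h1
    linarith
  have hne : coveringNumber δ S.E ≠ ⊤ := coveringNumber_ne_top S.E_subset_I0 hδ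
  set N : ℕ := (coveringNumber δ S.E).toNat with hN
  have hN1 : 1 ≤ N := by
    have h := one_le_coveringNumber (δ := δ) (S.E_nonempty hnorm)
    have := ENat.toNat_le_toNat h hne
    simpa using this
  have hNle : ∀ M : ℕ, coveringNumber δ S.E ≤ (M : ℕ∞) → (N : ℝ) ≤ M := by
    intro M hM
    have := ENat.toNat_le_toNat hM (by simp)
    simp only [ENat.toNat_coe] at this
    exact_mod_cast this
  rcases le_or_gt ((S.n (K+1) : ℝ) * S.hk K) (2*δ) with hc | hc
  · -- one ball per level-K interval
    have hcov := S.covering_upper hnorm K hδ (m := 1) le_rfl (by push_cast; linarith)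
    rw [S.ext_nil_card] at hcov
    have hNle' : (N : ℝ) ≤ S.Nk K := by
      have := hNle (S.Nk K * 1) hcov
      simpa using this
    have hlogN : Real.log N ≤ Real.log (S.Nk K) :=
      Real.log_le_log (by exact_mod_cast hN1) hNle'
    have hKK : K - 1 + 1 = K := by omega
    refine le_trans ?_ (le_max_right _ _)
    rw [sq, hKK]
    apply div_le_div₀ (Real.log_nonneg (by exact_mod_cast S.Nk_pos K))
      hlogN (S.neg_log_hk_pos hnorm (K-1)) hlogδ2
  · -- several balls per level-K interval
    set x : ℝ := (S.n (K+1) : ℝ) * S.hk K / (2*δ) with hx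
    have hx1 : 1 < x := by
      rw [hx, lt_div_iff₀ (by linarith)]
      linarith
    set m : ℕ := ⌈x⌉₊ with hm
    have hm1 : 1 ≤ m := Nat.one_le_ceil_iff.2 (by linarith)
    have hxm : x ≤ m := Nat.le_ceil x
    have hcov := S.covering_upper hnorm K hδ hm1 (by
      have : (S.n (K+1) : ℝ) * S.hk K = 2*δ*x := by
        rw [hx]; field_simp
      rw [this]
      have : (0:ℝ) < 2*δ := by linarith
      nlinarith)
    rw [S.ext_nil_card] at hcov
    have hm2 : (m : ℝ) ≤ 2*x := by
      have := Nat.ceil_lt_add_one (a := x) (by linarith)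
      have : (m:ℝ) < x + 1 := this
      linarith
    have hNle' : (N : ℝ) ≤ (S.Nk (K+1) : ℝ) * (S.hk K / δ) := by
      have hNM := hNle (S.Nk K * m) hcov
      have h4 : (0:ℝ) < S.Nk K := by exact_mod_cast S.Nk_pos K
      have h5 : ((S.Nk K * m : ℕ) : ℝ) = (S.Nk K : ℝ) * m := by push_cast; ring
      have h6 : (S.Nk (K+1) : ℝ) = (S.Nk K : ℝ) * (S.n (K+1) : ℝ) := by
        rw [Nk_succ]; push_cast; ring
      calc (N:ℝ) ≤ (S.Nk K : ℝ) * m := by rw [← h5]; exact hNM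
        _ ≤ (S.Nk K : ℝ) * (2*x) := by nlinarith
        _ = (S.Nk (K+1) : ℝ) * (S.hk K / δ) := by
            rw [h6, hx]; field_simp
    set A : ℝ := Real.log (S.Nk (K+1)) with hA
    set B : ℝ := - Real.log (S.hk K) with hB
    set D : ℝ := - Real.log δ with hD
    have hApos : 0 < A := S.log_Nk_pos K
    have hAB : A ≤ B := S.log_Nk_le hnorm K
    have hDB : D ≤ B := hlogδ3
    have hlogN : Real.log N ≤ A - B + D := by
      have hNkpos : (0:ℝ) < (S.Nk (K+1) : ℝ) := by exact_mod_cast S.Nk_pos (K+1)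
      have hhkpos := S.hk_pos hnorm K
      have h8 := Real.log_le_log (by exact_mod_cast hN1) hNle'
      rw [Real.log_mul (ne_of_gt hNkpos) (ne_of_gt (div_pos hhkpos hδ)),
        Real.log_div (ne_of_gt hhkpos) (ne_of_gt hδ)] at h8
      rw [hA, hB, hD]
      linarith
    refine le_trans ?_ (le_max_left _ _)
    rw [sq]
    have hBpos : 0 < B := S.neg_log_hk_pos hnorm K
    have hDpos : 0 < D := hlogδ
    calc Real.log N / D ≤ (A - B + D) / D := by
          rw [div_le_div_iff₀ hDpos hDpos]
          nlinarith [hlogN, hDpos]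
      _ ≤ A / B := by
          rw [div_le_div_iff₀ hDpos hBpos]
          nlinarith [mul_nonneg (by linarith : (0:ℝ) ≤ B - D) (by linarith : (0:ℝ) ≤ B - A)]

end HPS

section LimsupHelpers

lemma EReal_le_coe_of_forall {x : EReal} {Λ : ℝ}
    (h : ∀ ε : ℝ, 0 < ε → x ≤ ((Λ + ε : ℝ) : EReal)) : x ≤ (Λ : EReal) := by
  by_contra hc
  push_neg at hc
  obtain ⟨z, hz1, hz2⟩ := EReal.exists_between_coe_real hc
  have hε : (0:ℝ) < z - Λ := by exact_mod_cast sub_pos.2 (EReal.coe_lt_coe_iff.1 hz1)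
  have := h (z - Λ) hε
  have hzz : ((Λ + (z - Λ) : ℝ) : EReal) = (z : EReal) := by norm_num
  rw [hzz] at this
  exact absurd this (not_le.2 hz2)

lemma EReal_coe_le_of_forall {x : EReal} {Λ : ℝ}
    (h : ∀ ε : ℝ, 0 < ε → ((Λ - ε : ℝ) : EReal) ≤ x) : (Λ : EReal) ≤ x := by
  by_contra hc
  push_neg at hc
  obtain ⟨z, hz1, hz2⟩ := EReal.exists_between_coe_real hc
  have hε : (0:ℝ) < Λ - z := by exact_mod_cast sub_pos.2 (EReal.coe_lt_coe_iff.1 hz2)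
  have := h (Λ - z) hε
  have hzz : ((Λ - (Λ - z) : ℝ) : EReal) = (z : EReal) := by norm_num
  rw [hzz] at this
  exact absurd this (not_le.2 hz1)

lemma limsup_comp_le {u : ℝ → EReal} {l : Filter ℝ} {h : ℕ → ℝ}
    (hh : Filter.Tendsto h Filter.atTop l) :
    Filter.limsup (fun n => u (h n)) Filter.atTop ≤ Filter.limsup u l := by
  have e1 : Filter.limsup (fun n => u (h n)) Filter.atTop =
      Filter.limsup u (Filter.map h Filter.atTop) := by
    rw [Filter.limsup, Filter.limsup, Filter.map_map]
    rfl
  rw [e1]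
  exact Filter.limsup_le_limsup_of_le hh

lemma upperBoxDim_mono {A B : Set ℝ} (h : A ⊆ B) : upperBoxDim A ≤ upperBoxDim B := by
  classical
  rw [upperBoxDim, upperBoxDim]
  by_cases hB : ∀ δ : ℝ, 0 < δ → coveringNumber δ B ≠ ⊤
  · have hA : ∀ δ : ℝ, 0 < δ → coveringNumber δ A ≠ ⊤ := fun δ hδ =>
      ne_top_of_le_ne_top (hB δ hδ) (coveringNumber_mono h)
    rw [if_pos hA, if_pos hB]
    refine Filter.limsup_le_limsup ?_ (by isBoundedDefault) (by isBoundedDefault)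
    have hmem : Set.Ioo (0:ℝ) 1 ∈ nhdsWithin 0 (Set.Ioi 0) :=
      Ioo_mem_nhdsGT_of_mem ⟨le_rfl, by norm_num⟩
    filter_upwards [hmem] with δ hδ
    obtain ⟨hδ0, hδ1⟩ := hδ
    apply EReal.coe_le_coe_iff.2
    have hlogδ : 0 < - Real.log δ := by
      have := Real.log_neg hδ0 hδ1
      linarith
    have hlog : Real.log (((coveringNumber δ A).toNat : ℕ) : ℝ) ≤
        Real.log (((coveringNumber δ B).toNat : ℕ) : ℝ) :=
      log_nat_mono (ENat.toNat_le_toNat (coveringNumber_mono h) (hB δ hδ0))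
    rw [div_le_div_iff₀ hlogδ hlogδ]
    nlinarith [hlog, hlogδ]
  · rw [if_neg hB]
    exact le_top

lemma upperBoxDim_closure (A : Set ℝ) : upperBoxDim (closure A) = upperBoxDim A := by
  classical
  have h1 : ∀ δ : ℝ, coveringNumber δ (closure A) = coveringNumber δ A :=
    fun δ => coveringNumber_closure
  rw [upperBoxDim, upperBoxDim]
  by_cases hA : ∀ δ : ℝ, 0 < δ → coveringNumber δ A ≠ ⊤
  · rw [if_pos (fun δ hδ => (h1 δ) ▸ hA δ hδ), if_pos hA]
    apply Filter.limsup_congr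
    exact Filter.Eventually.of_forall (fun δ => by rw [h1 δ])
  · rw [if_neg, if_neg hA]
    intro hc
    exact hA (fun δ hδ => (h1 δ) ▸ hc δ hδ)

end LimsupHelpers

namespace HPS

variable (S : HPS)

lemma ubd_E_le (hnorm : S.b ([] : List ℕ) - S.a [] = 1) :
    upperBoxDim S.E ≤ ((Filter.limsup S.sq Filter.atTop : ℝ) : EReal) := by
  classical
  rw [upperBoxDim, if_pos (fun δ hδ => coveringNumber_ne_top S.E_subset_I0 hδ)]
  set Λ : ℝ := Filter.limsup S.sq Filter.atTop with hΛ
  apply EReal_le_coe_of_forall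
  intro ε hε
  have hbd : Filter.IsBoundedUnder (· ≤ ·) Filter.atTop S.sq :=
    ⟨1, Filter.eventually_map.2 (Filter.Eventually.of_forall (fun k => S.sq_le_one hnorm k))⟩
  have hev : ∀ᶠ k in Filter.atTop, S.sq k < Λ + ε :=
    Filter.eventually_lt_of_limsup_lt (by linarith [le_refl Λ] : Λ < Λ + ε) hbd
  obtain ⟨K, hKev⟩ := Filter.eventually_atTop.1 hev
  refine Filter.limsup_le_of_le (by isBoundedDefault) ?_
  have hmem : Set.Ioo (0:ℝ) (S.hk (K+1)) ∈ nhdsWithin 0 (Set.Ioi 0) :=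
    Ioo_mem_nhdsGT_of_mem ⟨le_rfl, S.hk_pos hnorm (K+1)⟩
  filter_upwards [hmem] with δ hδ
  obtain ⟨hδ0, hδK⟩ := hδ
  have hex : ∃ k, S.hk k ≤ δ := by
    obtain ⟨n, hn⟩ := exists_pow_lt_of_lt_one hδ0 (by norm_num : (1:ℝ)/2 < 1)
    refine ⟨n, le_trans (S.hk_le_pow hnorm n) (le_trans ?_ hn.le)⟩
    apply pow_le_pow_of_le_one (by norm_num) (by norm_num) (by omega)
  set k₀ := Nat.find hex with hk₀def
  have hk₀ : S.hk k₀ ≤ δ := Nat.find_spec hex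
  have hk₀K : K + 2 ≤ k₀ := by
    by_contra hcon
    push_neg at hcon
    have h1 : S.hk (K+1) ≤ S.hk k₀ := (S.hk_anti hnorm).antitone (by omega)
    linarith
  have hK1 : 1 ≤ k₀ := by omega
  have hlt : δ < S.hk (k₀ - 1) := by
    have := Nat.find_min hex (m := k₀ - 1) (by omega)
    linarith [not_le.1 this]
  have hratio := S.ratio_le hnorm hK1 hk₀ hlt
  have hb1 : S.sq k₀ ≤ Λ + ε := (hKev k₀ (by omega)).le
  have hb2 : S.sq (k₀ - 1) ≤ Λ + ε := (hKev (k₀ - 1) (by omega)).le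
  have hfinal : Real.log (((coveringNumber δ S.E).toNat : ℕ) : ℝ) / (-Real.log δ) ≤ Λ + ε :=
    le_trans hratio (max_le hb1 hb2)
  exact EReal.coe_le_coe_iff.2 hfinal

/-- generic lower bound for the upper box dimension from covering counts along `h_m` -/
lemma ubd_ge (hnorm : S.b ([] : List ℕ) - S.a [] = 1) {X : Set ℝ} {C k₀ : ℕ} (hC : 1 ≤ C)
    (hX : ∀ m, k₀ ≤ m → ((S.Nk (m+1) : ℕ) : ℕ∞) ≤ (C : ℕ∞) * coveringNumber (S.hk m) X) :
    ((Filter.limsup S.sq Filter.atTop : ℝ) : EReal) ≤ upperBoxDim X := by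
  classical
  rw [upperBoxDim]
  split_ifs with hfin
  swap
  · exact le_top
  set Λ : ℝ := Filter.limsup S.sq Filter.atTop with hΛ
  set f : ℝ → EReal := fun δ =>
    ((Real.log (((coveringNumber δ X).toNat : ℕ) : ℝ) / (-Real.log δ) : ℝ) : EReal) with hf
  have htend : Filter.Tendsto S.hk Filter.atTop (nhdsWithin 0 (Set.Ioi 0)) := by
    apply tendsto_nhdsWithin_of_tendsto_nhds_of_eventually_within _ (S.hk_tendsto hnorm)
    exact Filter.Eventually.of_forall (fun k => S.hk_pos hnorm k)
  refine le_trans ?_ (limsup_comp_le (u := f) htend)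
  apply EReal_coe_le_of_forall
  intro ε hε
  -- frequently sq m is close to Λ
  have hcob : Filter.IsCoboundedUnder (· ≤ ·) Filter.atTop S.sq := by
    apply Filter.IsBoundedUnder.isCoboundedUnder_le
    exact ⟨0, Filter.eventually_map.2 (Filter.Eventually.of_forall
      (fun k => (S.sq_pos hnorm k).le))⟩
  have hfreq : ∃ᶠ m in Filter.atTop, Λ - ε/2 < S.sq m :=
    Filter.frequently_lt_of_lt_limsup hcob (by linarith)
  -- eventually the correction term is small
  have hevC : ∀ᶠ m in Filter.atTop, Real.log C / (- Real.log (S.hk m)) ≤ ε/2 := by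
    have htop : Filter.Tendsto (fun m : ℕ => (m:ℝ) * Real.log 2) Filter.atTop Filter.atTop :=
      Filter.Tendsto.atTop_mul_const (Real.log_pos one_lt_two) tendsto_natCast_atTop_atTop
    filter_upwards [htop.eventually_ge_atTop (2 * Real.log C / ε),
      Filter.eventually_ge_atTop k₀] with m hm _
    have hB := S.neg_log_hk_ge hnorm m
    have hBpos := S.neg_log_hk_pos hnorm m
    have hlog2 : 0 < Real.log 2 := Real.log_pos one_lt_two
    have h1 : 2 * Real.log C / ε ≤ - Real.log (S.hk m) := by
      have : (m:ℝ) * Real.log 2 ≤ ((m:ℝ)+1) * Real.log 2 := by nlinarith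
      linarith
    rw [div_le_iff₀ hBpos]
    rw [div_le_iff₀ hε] at h1
    nlinarith
  have hkey : ∃ᶠ m in Filter.atTop, ((Λ - ε : ℝ) : EReal) ≤ f (S.hk m) := by
    refine (hfreq.and_eventually (hevC.and (Filter.eventually_ge_atTop k₀))).mono ?_
    rintro m ⟨hsq, hcorr, hmk⟩
    have hne : coveringNumber (S.hk m) X ≠ ⊤ := hfin _ (S.hk_pos hnorm m)
    set T : ℕ := (coveringNumber (S.hk m) X).toNat with hT
    have hcast : coveringNumber (S.hk m) X = ((T : ℕ) : ℕ∞) := (ENat.coe_toNat hne).symm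
    have hXm := hX m hmk
    rw [hcast] at hXm
    have hXm' : S.Nk (m+1) ≤ C * T := by exact_mod_cast hXm
    have hT1 : 1 ≤ T := by
      by_contra hc
      push_neg at hc
      interval_cases T
      · simp at hXm'
        have := S.Nk_pos (m+1)
        omega
    have hNk2 := S.two_le_Nk_succ m
    have hCpos : (0:ℝ) < C := by exact_mod_cast hC
    have hTpos : (0:ℝ) < T := by exact_mod_cast hT1
    have hlogle : Real.log (S.Nk (m+1)) ≤ Real.log C + Real.log T := by
      have := log_nat_mono hXm'
      rwa [Nat.cast_mul, Real.log_mul (ne_of_gt hCpos) (ne_of_gt hTpos)] at this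
    have hBpos := S.neg_log_hk_pos hnorm m
    have hfb : Λ - ε ≤ Real.log (T : ℝ) / (- Real.log (S.hk m)) := by
      have h2 : (Real.log (S.Nk (m+1)) - Real.log C) / (- Real.log (S.hk m)) ≤
          Real.log (T : ℝ) / (- Real.log (S.hk m)) := by
        rw [div_le_div_iff₀ hBpos hBpos]
        nlinarith [hlogle, hBpos]
      have h3 : (Real.log (S.Nk (m+1)) - Real.log C) / (- Real.log (S.hk m)) =
          S.sq m - Real.log C / (- Real.log (S.hk m)) := by
        rw [sq, sub_div]
      linarith [h2, h3, hsq, hcorr]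
    exact EReal.coe_le_coe_iff.2 hfb
  exact Filter.le_limsup_of_frequently_le' hkey

end HPS

namespace HPS

variable (S : HPS)

lemma packing_le : packingDim S.E ≤ upperBoxDim S.E := by
  refine le_trans (iInf₂_le (fun _ : ℕ => S.E) ?_) ?_
  · intro x hx; exact Set.mem_iUnion.2 ⟨0, hx⟩
  · rw [ciSup_const]

lemma ubd_E_ge (hnorm : S.b ([] : List ℕ) - S.a [] = 1) {χ : ℝ} (hχ : 1 ≤ χ)
    (hgap : GapComparable S χ) :
    ((Filter.limsup S.sq Filter.atTop : ℝ) : EReal) ≤ upperBoxDim S.E := by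
  apply S.ubd_ge hnorm (C := 3 * (⌊3*χ⌋₊ + 1)) (k₀ := 0) (by omega)
  intro m _
  have hcl := S.covering_lower hnorm hχ hgap (validWord_nil S.n) (m := m) (by simp)
  have hEI : S.E ∩ Set.Icc (S.a []) (S.b []) = S.E :=
    Set.inter_eq_self_of_subset_left S.E_subset_I0
  rw [hEI] at hcl
  have hcard : (S.ext [] (m + 1 - ([] : List ℕ).length)).card = S.Nk (m+1) := by
    simp only [List.length_nil, Nat.sub_zero]
    exact S.ext_nil_card (m+1)
  rwa [hcard] at hcl

lemma packing_ge (hnorm : S.b ([] : List ℕ) - S.a [] = 1) {χ : ℝ} (hχ : 1 ≤ χ)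
    (hgap : GapComparable S χ) :
    ((Filter.limsup S.sq Filter.atTop : ℝ) : EReal) ≤ packingDim S.E := by
  refine le_iInf₂ fun F hF => ?_
  have hE : IsClosed S.E := S.isClosed_E
  have hcs : CompleteSpace S.E := hE.completeSpace_coe
  have hne : Nonempty S.E := (S.E_nonempty hnorm).to_subtype
  set g : ℕ → Set S.E := fun i => (Subtype.val) ⁻¹' (closure (F i)) with hg
  have hgc : ∀ i, IsClosed (g i) := fun i => isClosed_closure.preimage continuous_subtype_val
  have hgu : (⋃ i, g i) = Set.univ := by
    ext ⟨x, hx⟩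
    simp only [Set.mem_iUnion, Set.mem_univ, iff_true, hg, Set.mem_preimage]
    obtain ⟨i, hi⟩ := Set.mem_iUnion.1 (hF hx)
    exact ⟨i, subset_closure hi⟩
  obtain ⟨i, hi⟩ := nonempty_interior_of_iUnion_of_closed hgc hgu
  obtain ⟨⟨x, hxE⟩, hxint⟩ := hi
  obtain ⟨ε, hε, hball⟩ := Metric.mem_nhds_iff.1 (mem_interior_iff_mem_nhds.1 hxint)
  obtain ⟨k, hk⟩ : ∃ k, S.len k < ε := by
    obtain ⟨n, hn⟩ := exists_pow_lt_of_lt_one hε (by norm_num : (1:ℝ)/2 < 1)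
    exact ⟨n, lt_of_le_of_lt (S.len_le n) hn⟩
  have hxEk := S.E_subset_Ek k hxE
  simp only [Ek, Set.mem_iUnion, Set.mem_setOf_eq, exists_prop] at hxEk
  obtain ⟨τ, ⟨hτl, hτv⟩, hxτ⟩ := hxEk
  have hsub : S.E ∩ Set.Icc (S.a τ) (S.b τ) ⊆ closure (F i) := by
    rintro y ⟨hyE, hyτ⟩
    have h1 := S.length_eq hnorm τ hτv
    rw [hτl] at h1
    have hdist : dist (⟨y, hyE⟩ : S.E) ⟨x, hxE⟩ < ε := by
      rw [Subtype.dist_eq, Real.dist_eq]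
      have habs : |y - x| ≤ S.len k := by
        rw [abs_le]
        constructor
        · linarith [hyτ.1, hxτ.2]
        · linarith [hyτ.2, hxτ.1]
      linarith
    exact hball hdist
  have hX : ∀ m, k ≤ m → ((S.Nk (m+1) : ℕ) : ℕ∞) ≤
      ((3 * (⌊3*χ⌋₊ + 1) * S.Nk k : ℕ) : ℕ∞) *
        coveringNumber (S.hk m) (S.E ∩ Set.Icc (S.a τ) (S.b τ)) := by
    intro m hm
    have hcl := S.covering_lower hnorm hχ hgap hτv (m := m) (by rw [hτl]; exact hm)
    have hmul := mul_le_mul_right hcl ((S.Nk k : ℕ) : ℕ∞)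
    have heq : ((S.Nk k : ℕ) : ℕ∞) * (((S.ext τ (m + 1 - τ.length)).card : ℕ) : ℕ∞) =
        ((S.Nk (m+1) : ℕ) : ℕ∞) := by
      have := S.ext_card_mul hτl hm
      rw [hτl]
      exact_mod_cast congrArg (fun z : ℕ => (z : ℕ∞)) this
    rw [heq] at hmul
    refine hmul.trans (le_of_eq ?_)
    push_cast
    ring
  have hC1 : 1 ≤ 3 * (⌊3*χ⌋₊ + 1) * S.Nk k := by
    have := S.Nk_pos k
    have h2 : 1 ≤ 3 * (⌊3*χ⌋₊ + 1) := by omega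
    calc 1 = 1 * 1 := by ring
      _ ≤ 3 * (⌊3*χ⌋₊ + 1) * S.Nk k := Nat.mul_le_mul h2 (by omega)
  calc ((Filter.limsup S.sq Filter.atTop : ℝ) : EReal)
      ≤ upperBoxDim (S.E ∩ Set.Icc (S.a τ) (S.b τ)) := S.ubd_ge hnorm hC1 hX
    _ ≤ upperBoxDim (closure (F i)) := upperBoxDim_mono hsub
    _ = upperBoxDim (F i) := upperBoxDim_closure _
    _ ≤ ⨆ j, upperBoxDim (F j) := le_iSup (fun j => upperBoxDim (F j)) i

end HPS

/-- **Lemma 2.1 (Wang–Xi–Yang).** If the gaps of the homogeneous perfect set `E` are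
`χ`-comparable (`χ ≥ 1`) and the initial interval has length 1, then
`dim_P E = limsup_k log(n₁⋯n_{k+1}) / (-log((c₁⋯c_k - ξ_{k+1,0} - ξ_{k+1,n_{k+1}})/n_{k+1}))`. -/
theorem packingDim_formula
    (S : HPS) (χ : ℝ) (hχ : 1 ≤ χ) (hgap : GapComparable S χ)
    (hnorm : S.b ([] : List ℕ) - S.a [] = 1) :
    packingDim S.E =
      ((Filter.limsup (fun k : ℕ =>
          Real.log (∏ j ∈ Finset.Icc 1 (k + 1), (S.n j : ℝ)) /
            (-Real.log
              (((∏ j ∈ Finset.Icc 1 k, S.c j) - S.ξ (k + 1) 0 -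
                  S.ξ (k + 1) (S.n (k + 1))) / (S.n (k + 1) : ℝ))))
        Filter.atTop : ℝ) : EReal) := by
  have hfun : (fun k : ℕ =>
      Real.log (∏ j ∈ Finset.Icc 1 (k + 1), (S.n j : ℝ)) /
        (-Real.log
          (((∏ j ∈ Finset.Icc 1 k, S.c j) - S.ξ (k + 1) 0 -
              S.ξ (k + 1) (S.n (k + 1))) / (S.n (k + 1) : ℝ)))) = S.sq :=
    funext fun k => (S.sq_eq k).symm
  rw [hfun]
  exact le_antisymm (le_trans S.packing_le (S.ubd_E_le hnorm))
    (S.packing_ge hnorm hχ hgap)
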